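/- arXiv:2008.07344 — 9 statements merged into one kernel-verified Lean document; each statement's English description precedes it below -/
import Mathlib

section
/- For every positive integer n, the 3-uniform hypergraph T whose vertex set is [3]^n (all functions from {1,…,n} to {1,2,3}) and whose edges are exactly the combinatorial lines in [3]^n contains no 3-tent. -/
open Finset

/-- Three distinct vectors `u, v, w : [3]^n` form a combinatorial line: there is a set
`S` of coordinates such that `u`, `v`, `w` agree outside `S`, and on all of `S` they take
three fixed, pairwise distinct values. -/
def IsCombLine {n : ℕ} (u v w : Fin n → Fin 3) : Prop :=
  u ≠ v ∧ u ≠ w ∧ v ≠ w ∧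
  ∃ S : Finset (Fin n),
    (∀ i ∉ S, u i = v i ∧ v i = w i) ∧
    ∃ a b c : Fin 3, a ≠ b ∧ a ≠ c ∧ b ≠ c ∧ ∀ i ∈ S, u i = a ∧ v i = b ∧ w i = c

/-- The edge set of the hypergraph on `[3]^n` whose edges are the combinatorial lines. -/
def lineEdges (n : ℕ) : Set (Finset (Fin n → Fin 3)) :=
  {e | ∃ u v w : Fin n → Fin 3, IsCombLine u v w ∧ e = {u, v, w}}

/-- The point of a line with coordinate set `S`, base `f`, and value `t` on `S`. -/
def ptS {n : ℕ} (S : Finset (Fin n)) (f : Fin n → Fin 3) (t : Fin 3) : Fin n → Fin 3 :=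
  fun i => if i ∈ S then t else f i

lemma fin3_cases : ∀ a b c t : Fin 3, a ≠ b → a ≠ c → b ≠ c → t = a ∨ t = b ∨ t = c := by
  decide

/-- Canonical form of a combinatorial line. -/
lemma line_canon {n : ℕ} {e : Finset (Fin n → Fin 3)} (he : e ∈ lineEdges n) :
    ∃ (S : Finset (Fin n)) (f : Fin n → Fin 3), S.Nonempty ∧
      ∀ q, q ∈ e ↔ ∃ t, q = ptS S f t := by
  obtain ⟨u, v, w, ⟨huv, huw, hvw, S, hout, a, b, c, hab, hac, hbc, hin⟩, rfl⟩ := he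
  have hu : u = ptS S u a := by
    funext i
    by_cases h : i ∈ S
    · simp only [ptS, if_pos h]; exact (hin i h).1
    · simp only [ptS, if_neg h]
  have hv : v = ptS S u b := by
    funext i
    by_cases h : i ∈ S
    · simp only [ptS, if_pos h]; exact (hin i h).2.1
    · simp only [ptS, if_neg h]; exact (hout i h).1.symm
  have hw : w = ptS S u c := by
    funext i
    by_cases h : i ∈ S
    · simp only [ptS, if_pos h]; exact (hin i h).2.2
    · simp only [ptS, if_neg h]; exact ((hout i h).1.trans (hout i h).2).symm
  refine ⟨S, u, ?_, ?_⟩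
  · by_contra hS
    rw [Finset.not_nonempty_iff_eq_empty] at hS
    exact huv (funext fun i => (hout i (by simp [hS])).1)
  · intro q
    constructor
    · intro hq
      simp only [Finset.mem_insert, Finset.mem_singleton] at hq
      rcases hq with rfl | rfl | rfl
      · exact ⟨a, hu⟩
      · exact ⟨b, hv⟩
      · exact ⟨c, hw⟩
    · rintro ⟨t, rfl⟩
      simp only [Finset.mem_insert, Finset.mem_singleton]
      rcases fin3_cases a b c t hab hac hbc with rfl | rfl | rfl
      · exact Or.inl hu.symm
      · exact Or.inr (Or.inl hv.symm)
      · exact Or.inr (Or.inr hw.symm)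

/-- The core contradiction in the tent argument. -/
lemma tent_core {n : ℕ} {S S₁ S₂ : Finset (Fin n)}
    {f g₁ g₂ x : Fin n → Fin 3} {w₁ w₂ w₃ s₁ s₂ t₁ t₂ : Fin 3}
    (h12 : w₁ ≠ w₂) (h13 : w₁ ≠ w₃) (h23 : w₂ ≠ w₃)
    (ea : ptS S f w₁ = ptS S₁ g₁ s₁) (ex1 : x = ptS S₁ g₁ t₁)
    (eb : ptS S f w₂ = ptS S₂ g₂ s₂) (ex2 : x = ptS S₂ g₂ t₂)
    {i₀ : Fin n} (hi₀ : i₀ ∈ S) (hxi₀ : x i₀ = w₃)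
    (hcx : ptS S f w₃ ≠ x) : False := by
  have key : ∀ (S' : Finset (Fin n)) (g : Fin n → Fin 3) (s t w : Fin 3),
      ptS S f w = ptS S' g s → x = ptS S' g t → w ≠ w₃ →
      i₀ ∈ S' ∧ s = w ∧ t = w₃ := by
    intro S' g s t w hp hxe hw
    have h1 := congrFun hp i₀
    have h2 := congrFun hxe i₀
    simp only [ptS, if_pos hi₀] at h1
    simp only [ptS] at h2
    by_cases hmem : i₀ ∈ S'
    · simp only [if_pos hmem] at h1 h2
      exact ⟨hmem, h1.symm, by rw [← h2, hxi₀]⟩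
    · simp only [if_neg hmem] at h1 h2
      exact absurd ((h1.trans h2.symm).trans hxi₀) hw
  obtain ⟨hi₀1, hs₁, ht₁⟩ := key S₁ g₁ s₁ t₁ w₁ ea ex1 h13
  obtain ⟨hi₀2, hs₂, ht₂⟩ := key S₂ g₂ s₂ t₂ w₂ eb ex2 h23
  obtain ⟨j, hj⟩ := Function.ne_iff.mp hcx
  have ha_j := congrFun ea j
  have hb_j := congrFun eb j
  have hx1_j := congrFun ex1 j
  have hx2_j := congrFun ex2 j
  simp only [ptS] at ha_j hb_j hx1_j hx2_j hj
  by_cases hjS : j ∈ S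
  · rw [if_pos hjS] at ha_j hb_j hj
    by_cases hj1 : j ∈ S₁
    · rw [if_pos hj1, ht₁] at hx1_j
      exact hj hx1_j.symm
    · by_cases hj2 : j ∈ S₂
      · rw [if_pos hj2, ht₂] at hx2_j
        exact hj hx2_j.symm
      · rw [if_neg hj1] at ha_j hx1_j
        rw [if_neg hj2] at hb_j hx2_j
        exact h12 ((ha_j.trans hx1_j.symm).trans (hx2_j.trans hb_j.symm))
  · rw [if_neg hjS] at ha_j hb_j hj
    by_cases hj1 : j ∈ S₁
    · by_cases hj2 : j ∈ S₂
      · rw [if_pos hj1, hs₁] at ha_j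
        rw [if_pos hj2, hs₂] at hb_j
        exact h12 (ha_j.symm.trans hb_j)
      · rw [if_neg hj2] at hb_j hx2_j
        exact hj (hb_j.trans hx2_j.symm)
    · rw [if_neg hj1] at ha_j hx1_j
      exact hj (ha_j.trans hx1_j.symm)

/-- For every positive integer `n`, the `3`-uniform hypergraph on `[3]^n` whose edges
are the combinatorial lines contains no `3`-tent. -/
theorem stmt3 (n : ℕ) (hn : 1 ≤ n) :
    ¬ ∃ e₁ e₂ e₃ e₄ : Finset (Fin n → Fin 3),
      e₁ ∈ lineEdges n ∧ e₂ ∈ lineEdges n ∧ e₃ ∈ lineEdges n ∧ e₄ ∈ lineEdges n ∧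
      (e₁ ∩ e₂ ∩ e₃).Nonempty ∧
      (e₄ ∩ e₁).card = 1 ∧ (e₄ ∩ e₂).card = 1 ∧ (e₄ ∩ e₃).card = 1 ∧
      e₄ ∩ e₁ ≠ e₄ ∩ e₂ ∧ e₄ ∩ e₁ ≠ e₄ ∩ e₃ ∧ e₄ ∩ e₂ ≠ e₄ ∩ e₃ := by
  rintro ⟨e₁, e₂, e₃, e₄, h1, h2, h3, h4, ⟨x, hx⟩, c1, c2, c3, n12, n13, n23⟩
  obtain ⟨S₁, f₁, hS₁ne, m1⟩ := line_canon h1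
  obtain ⟨S₂, f₂, hS₂ne, m2⟩ := line_canon h2
  obtain ⟨S₃, f₃, hS₃ne, m3⟩ := line_canon h3
  obtain ⟨S, f, ⟨i₀, hi₀⟩, m4⟩ := line_canon h4
  obtain ⟨a, ha⟩ := Finset.card_eq_one.mp c1
  obtain ⟨b, hb⟩ := Finset.card_eq_one.mp c2
  obtain ⟨c, hc⟩ := Finset.card_eq_one.mp c3
  simp only [Finset.mem_inter] at hx
  have hx1 := hx.1.1
  have hx2 := hx.1.2
  have hx3 := hx.2
  have ha4 : a ∈ e₄ ∧ a ∈ e₁ := Finset.mem_inter.mp (ha ▸ Finset.mem_singleton_self a)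
  have hb4 : b ∈ e₄ ∧ b ∈ e₂ := Finset.mem_inter.mp (hb ▸ Finset.mem_singleton_self b)
  have hc4 : c ∈ e₄ ∧ c ∈ e₃ := Finset.mem_inter.mp (hc ▸ Finset.mem_singleton_self c)
  obtain ⟨α, haα⟩ := (m4 a).mp ha4.1
  obtain ⟨β, hbβ⟩ := (m4 b).mp hb4.1
  obtain ⟨γ, hcγ⟩ := (m4 c).mp hc4.1
  obtain ⟨s₁, has₁⟩ := (m1 a).mp ha4.2
  obtain ⟨s₂, hbs₂⟩ := (m2 b).mp hb4.2
  obtain ⟨s₃, hcs₃⟩ := (m3 c).mp hc4.2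
  obtain ⟨t₁, hxt₁⟩ := (m1 x).mp hx1
  obtain ⟨t₂, hxt₂⟩ := (m2 x).mp hx2
  obtain ⟨t₃, hxt₃⟩ := (m3 x).mp hx3
  have hab : a ≠ b := fun h => n12 (by rw [ha, hb, h])
  have hac : a ≠ c := fun h => n13 (by rw [ha, hc, h])
  have hbc : b ≠ c := fun h => n23 (by rw [hb, hc, h])
  have hαβ : α ≠ β := fun h => hab (haα.trans (h ▸ hbβ.symm))
  have hαγ : α ≠ γ := fun h => hac (haα.trans (h ▸ hcγ.symm))
  have hβγ : β ≠ γ := fun h => hbc (hbβ.trans (h ▸ hcγ.symm))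
  have hxe4 : x ∉ e₄ := by
    intro hx4
    have hxa : x = a := Finset.mem_singleton.mp (ha ▸ Finset.mem_inter.mpr ⟨hx4, hx1⟩)
    have hxb : x = b := Finset.mem_singleton.mp (hb ▸ Finset.mem_inter.mpr ⟨hx4, hx2⟩)
    exact hab (hxa ▸ hxb)
  have hax : a ≠ x := fun h => hxe4 (h ▸ ha4.1)
  have hbx : b ≠ x := fun h => hxe4 (h ▸ hb4.1)
  have hcx : c ≠ x := fun h => hxe4 (h ▸ hc4.1)
  rcases fin3_cases α β γ (x i₀) hαβ hαγ hβγ with h | h | h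
  · exact tent_core hβγ hαβ.symm hαγ.symm (hbβ.symm.trans hbs₂) hxt₂
      (hcγ.symm.trans hcs₃) hxt₃ hi₀ h (fun he => hax (haα.trans he))
  · exact tent_core hαγ hαβ hβγ.symm (haα.symm.trans has₁) hxt₁
      (hcγ.symm.trans hcs₃) hxt₃ hi₀ h (fun he => hbx (hbβ.trans he))
  · exact tent_core hαβ hαγ hβγ (haα.symm.trans has₁) hxt₁
      (hbβ.symm.trans hbs₂) hxt₂ hi₀ h (fun he => hcx (hcγ.trans he))
end

section
/- There exists t₀ such that for every integer t ≥ t₀ and every t-uniform hypergraph G, the (t−1)-blown-up hypergraph H' = G^{(t−1)} has a vertex cover of size at most (2·ln t/(t−1) + 1/t) · |V(H')|. -/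
/-!
Label the vertices by `ZMod r` with `r = ⌈(t - 1) / (2 ln t)⌉`, and put a `(t - 1)`-set into the
cover when its labels miss some value of `ZMod r` or sum to zero. Every edge contains such a set:
if the edge misses a label, drop any vertex; otherwise some vertex carries the label sum of the
edge, and dropping it leaves sum zero. A fixed `(t - 1)`-set is put into the cover by at most
a fraction `r (1 - 1/r)^(t-1) + 1/r ≤ 1/t + 2 ln t / (t - 1)` of all labellings (union bound over
the missed value, plus one linear constraint), so some labelling does at least as well as the
average.
-/

open Finset

/-- The vertex set of the `k`-blown-up hypergraph: all `k`-element subsets of the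
vertex set contained in at least one edge. -/
def blowVertices {V : Type*} [DecidableEq V] (E : Finset (Finset V)) (k : ℕ) :
    Finset (Finset V) :=
  E.biUnion fun e => e.powersetCard k

def MissesLabelOrSumsToZero {V M : Type*} [AddCommMonoid M] (f : V → M) (s : Finset V) : Prop :=
  (∃ j, ∀ x ∈ s, f x ≠ j) ∨ ∑ x ∈ s, f x = 0

instance {V M : Type*} [AddCommMonoid M] [Fintype M] [DecidableEq M] (f : V → M) (s : Finset V) :
    Decidable (MissesLabelOrSumsToZero f s) := by
  unfold MissesLabelOrSumsToZero; infer_instance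

theorem Finset.exists_card_filter_le_of_forall_card_filter_le {Ω α : Type*} [Fintype Ω]
    [Nonempty Ω] (X : Finset α) (P : Ω → α → Prop) [∀ ω x, Decidable (P ω x)] (δ : ℝ)
    (h : ∀ x ∈ X, (#{ω | P ω x} : ℝ) ≤ δ * Fintype.card Ω) :
    ∃ ω, (#{x ∈ X | P ω x} : ℝ) ≤ δ * #X := by
  have hsum : ∑ ω, (#{x ∈ X | P ω x} : ℝ) ≤ ∑ _ω : Ω, δ * #X := by
    calc ∑ ω, (#{x ∈ X | P ω x} : ℝ) = ∑ x ∈ X, (#{ω | P ω x} : ℝ) := by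
          simp only [card_filter, Nat.cast_sum]; exact sum_comm
      _ ≤ ∑ _x ∈ X, δ * Fintype.card Ω := sum_le_sum h
      _ = ∑ _ω : Ω, δ * #X := by simp only [sum_const, card_univ, nsmul_eq_mul]; ring
  obtain ⟨ω, -, hω⟩ := exists_le_of_sum_le univ_nonempty hsum
  exact ⟨ω, hω⟩

section Labelling

variable {V M : Type*}

lemma exists_missesLabelOrSumsToZero_erase [DecidableEq V] [AddCancelCommMonoid M]
    (f : V → M) {e : Finset V} (he : e.Nonempty) :
    ∃ x ∈ e, MissesLabelOrSumsToZero f (e.erase x) := by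
  by_cases hmiss : ∃ j, ∀ x ∈ e, f x ≠ j
  · obtain ⟨j, hj⟩ := hmiss
    obtain ⟨x, hx⟩ := he
    exact ⟨x, hx, Or.inl ⟨j, fun y hy => hj y (mem_of_mem_erase hy)⟩⟩
  · push Not at hmiss
    obtain ⟨x, hx, hfx⟩ := hmiss (∑ y ∈ e, f y)
    exact ⟨x, hx, Or.inr (add_eq_left.mp ((add_sum_erase e f hx).trans hfx.symm))⟩

variable [Fintype V] [DecidableEq V] [Fintype M] [DecidableEq M]

lemma card_filter_forall_mem (s : Finset V) (B : Finset M) :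
    #{f : V → M | ∀ x ∈ s, f x ∈ B} = #B ^ #s * Fintype.card M ^ (Fintype.card V - #s) := by
  have hpi : ({f : V → M | ∀ x ∈ s, f x ∈ B} : Finset _)
      = Fintype.piFinset (fun x => if x ∈ s then B else univ) := by
    ext f
    simp only [mem_filter, mem_univ, true_and, Fintype.mem_piFinset]
    refine ⟨fun h x => ?_, fun h x hx => by simpa [hx] using h x⟩
    split_ifs with hx
    exacts [h x hx, mem_univ _]
  rw [hpi, Fintype.card_piFinset]
  simp only [apply_ite card]
  have hin : ({x | x ∈ s} : Finset V) = s := by ext; simp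
  have hout : ({x | x ∉ s} : Finset V) = sᶜ := by ext; simp
  rw [prod_ite, prod_const, prod_const, card_univ, hin, hout, card_compl]

lemma card_filter_sum_eq_zero_le [AddCancelCommMonoid M] {s : Finset V} (hs : s.Nonempty) :
    #{f : V → M | ∑ x ∈ s, f x = 0} ≤ Fintype.card M ^ (Fintype.card V - 1) := by
  obtain ⟨x₀, hx₀⟩ := hs
  have htarget := card_filter_forall_mem (M := M) {x₀} {0}
  simp only [card_singleton, one_pow, one_mul] at htarget
  rw [← htarget]
  -- a zero-sum labelling is determined by its values off `x₀`
  refine card_le_card_of_injOn (fun f => Function.update f x₀ 0) (fun f _ => by simp) ?_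
  intro f hf g hg hfg
  simp only [coe_filter, mem_univ, true_and, Set.mem_ofPred_eq] at hf hg
  have hoff : ∀ y ≠ x₀, f y = g y := fun y hy => by
    simpa [Function.update_of_ne hy] using congrFun hfg y
  funext y
  by_cases hy : y = x₀
  · subst hy
    rw [← add_sum_erase s f hx₀, sum_congr rfl fun z hz => hoff z (ne_of_mem_erase hz),
      ← hg, ← add_sum_erase s g hx₀] at hf
    exact add_right_cancel hf
  · exact hoff y hy

lemma card_filter_missesLabelOrSumsToZero_le [AddCancelCommMonoid M] {s : Finset V}
    (hs : s.Nonempty) :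
    #{f : V → M | MissesLabelOrSumsToZero f s} ≤
      Fintype.card M * ((Fintype.card M - 1) ^ #s * Fintype.card M ^ (Fintype.card V - #s)) +
        Fintype.card M ^ (Fintype.card V - 1) := by
  have hunion : ({f : V → M | MissesLabelOrSumsToZero f s} : Finset _) ⊆
      (univ.biUnion fun j =>
        ({f : V → M | ∀ x ∈ s, f x ∈ ({j}ᶜ : Finset M)} : Finset _)) ∪
        ({f : V → M | ∑ x ∈ s, f x = 0} : Finset _) := by
    intro f hf
    rcases (mem_filter.mp hf).2 with ⟨j, hj⟩ | hzero
    · exact mem_union_left _ (mem_biUnion.mpr ⟨j, mem_univ _, by simpa using hj⟩)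
    · exact mem_union_right _ (by simpa using hzero)
  refine (card_le_card hunion).trans ((card_union_le _ _).trans (add_le_add ?_
    (card_filter_sum_eq_zero_le hs)))
  refine card_biUnion_le.trans (le_of_eq ?_)
  simp only [card_filter_forall_mem, card_compl, card_singleton, sum_const, card_univ,
    smul_eq_mul]

lemma card_filter_missesLabelOrSumsToZero_le_mul_card [AddCancelCommMonoid M] {s : Finset V}
    (hs : s.Nonempty) :
    (#{f : V → M | MissesLabelOrSumsToZero f s} : ℝ) ≤
      (Fintype.card M * (1 - 1 / (Fintype.card M : ℝ)) ^ #s + 1 / (Fintype.card M : ℝ)) *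
        Fintype.card (V → M) := by
  have hcount := (Nat.cast_le (α := ℝ)).mpr (card_filter_missesLabelOrSumsToZero_le (M := M) hs)
  set m := Fintype.card M
  set N := Fintype.card V
  have hm : 0 < m := Fintype.card_pos
  have hsN : #s ≤ N := card_le_univ s
  have hN : 1 ≤ N := hs.card_pos.trans_le hsN
  push_cast [Nat.cast_sub hm] at hcount
  have hm' : (m : ℝ) ≠ 0 := by positivity
  have hfactor : (m : ℝ) - 1 = m * (1 - 1 / m) := by field_simp
  have hsplit : (m : ℝ) ^ N = m ^ #s * m ^ (N - #s) := (pow_mul_pow_sub _ hsN).symm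
  have hpred : (m : ℝ) ^ N = m * m ^ (N - 1) := by rw [← pow_succ', Nat.sub_add_cancel hN]
  refine hcount.trans_eq ?_
  rw [Fintype.card_fun, Nat.cast_pow, add_mul]
  congr 1
  · rw [hsplit, hfactor, mul_pow]; ring
  · rw [hpred]; field_simp

end Labelling

noncomputable def numLabels (t : ℕ) : ℕ := ⌈((t : ℝ) - 1) / (2 * Real.log t)⌉₊

lemma four_mul_log_sq_le {x : ℝ} (hx : 4300 ≤ x) : 4 * Real.log x ^ 2 ≤ x - 1 := by
  set q := x ^ (1 / 4 : ℝ)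
  have hq4 : q ^ 4 = x := by
    rw [← Real.rpow_mul_natCast (by linarith)]; norm_num
  have hlog : Real.log x ≤ 4 * q := by
    have := Real.log_le_rpow_div (by linarith : 0 ≤ x) (by norm_num : (0 : ℝ) < 1 / 4)
    linarith
  have hq : 0 ≤ q := by positivity
  have hlog0 : 0 ≤ Real.log x := Real.log_nonneg (by linarith)
  nlinarith [mul_le_mul hlog hlog hlog0 (by positivity)]

lemma two_le_log {x : ℝ} (hx : 8 ≤ x) : 2 ≤ Real.log x := by
  rw [Real.le_log_iff_exp_le (by linarith), show (2 : ℝ) = 1 + 1 by norm_num, Real.exp_add]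
  nlinarith [Real.exp_one_lt_d9, Real.exp_pos 1]

lemma div_le_numLabels (t : ℕ) : ((t : ℝ) - 1) / (2 * Real.log t) ≤ numLabels t :=
  Nat.le_ceil _

lemma numLabels_lt {t : ℕ} (ht : 2 ≤ t) :
    (numLabels t : ℝ) < ((t : ℝ) - 1) / (2 * Real.log t) + 1 := by
  have : (1 : ℝ) < t := by exact_mod_cast ht
  exact Nat.ceil_lt_add_one (div_nonneg (by linarith) (by positivity))

lemma sub_one_div_two_mul_log_pos {t : ℕ} (ht : 2 ≤ t) :
    0 < ((t : ℝ) - 1) / (2 * Real.log t) := by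
  have ht1 : (1 : ℝ) < t := by exact_mod_cast ht
  exact div_pos (by linarith) (by have := Real.log_pos ht1; positivity)

lemma numLabels_pos {t : ℕ} (ht : 2 ≤ t) : 0 < numLabels t :=
  Nat.ceil_pos.mpr (sub_one_div_two_mul_log_pos ht)

lemma one_div_numLabels_le {t : ℕ} (ht : 2 ≤ t) :
    1 / (numLabels t : ℝ) ≤ 2 * Real.log t / ((t : ℝ) - 1) := by
  calc 1 / (numLabels t : ℝ) ≤ 1 / (((t : ℝ) - 1) / (2 * Real.log t)) :=
        one_div_le_one_div_of_le (sub_one_div_two_mul_log_pos ht) (div_le_numLabels t)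
    _ = 2 * Real.log t / ((t : ℝ) - 1) := one_div_div _ _

lemma numLabels_mul_one_sub_pow_le {t : ℕ} (ht : 4300 ≤ t) :
    (numLabels t : ℝ) * (1 - 1 / (numLabels t : ℝ)) ^ (t - 1) ≤ 1 / t := by
  have hT : (4300 : ℝ) ≤ t := by exact_mod_cast ht
  have hr1 : (1 : ℝ) ≤ numLabels t := by exact_mod_cast numLabels_pos (by omega : 2 ≤ t)
  have hcast : ((t - 1 : ℕ) : ℝ) = t - 1 := Nat.cast_pred (by omega)
  have hr_lo := div_le_numLabels t
  have hr_hi := numLabels_lt (by omega : 2 ≤ t)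
  set r : ℝ := (numLabels t : ℝ)
  set T : ℝ := (t : ℝ)
  set L := Real.log T
  have hL : 2 ≤ L := two_le_log (by linarith)
  -- `r ≤ (T - 1 + 2L) / 2L` and `4L² ≤ T - 1` give `(T - 1) / r ≥ 2L - 1`
  have hexponent : 2 * L - 1 ≤ (T - 1) / r := by
    rw [le_div_iff₀ (by linarith)]
    have h4 := four_mul_log_sq_le hT
    rw [div_add_one (by linarith), lt_div_iff₀ (by linarith)] at hr_hi
    nlinarith
  have hbase : 0 ≤ 1 - 1 / r := by rw [sub_nonneg, div_le_one (by linarith)]; exact hr1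
  have hpow : (1 - 1 / r) ^ (t - 1) ≤ Real.exp (-((T - 1) / r)) := by
    calc (1 - 1 / r) ^ (t - 1) ≤ Real.exp (-(1 / r)) ^ (t - 1) := by
          gcongr
          linarith [Real.add_one_le_exp (-(1 / r))]
      _ = Real.exp (-((T - 1) / r)) := by rw [← Real.exp_nat_mul, hcast]; ring_nf
  have hexp : Real.exp (-((T - 1) / r)) ≤ 3 / T ^ 2 := by
    have hexpL : Real.exp (2 * L) = T ^ 2 := by
      rw [two_mul, Real.exp_add, Real.exp_log (by linarith)]; ring
    calc Real.exp (-((T - 1) / r)) ≤ Real.exp (1 - 2 * L) := Real.exp_le_exp.mpr (by linarith)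
      _ = Real.exp 1 / T ^ 2 := by rw [Real.exp_sub, hexpL]
      _ ≤ 3 / T ^ 2 := by gcongr; linarith [Real.exp_one_lt_d9]
  have hr_le : r ≤ T / 3 := by
    have : (T - 1) / (2 * L) ≤ (T - 1) / 4 :=
      div_le_div_of_nonneg_left (by linarith) (by norm_num) (by linarith)
    linarith
  calc r * (1 - 1 / r) ^ (t - 1) ≤ (T / 3) * (3 / T ^ 2) :=
        mul_le_mul hr_le (hpow.trans hexp) (pow_nonneg hbase _) (by linarith)
    _ = 1 / T := by field_simp

/-- There is a `t₀` such that for every `t ≥ t₀` and every `t`-uniform hypergraph `G`,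
the `(t-1)`-blown-up hypergraph `H' = G^{(t-1)}` has a vertex cover of size at most
`(2 ln t/(t-1) + 1/t)·|V(H')|`. -/
theorem stmt4 :
    ∃ t₀ : ℕ, ∀ t : ℕ, t₀ ≤ t →
      ∀ (V : Type) [Fintype V] [DecidableEq V] (E : Finset (Finset V)),
        (∀ e ∈ E, e.card = t) →
        ∃ S : Finset (Finset V),
          S ⊆ blowVertices E (t - 1) ∧
          (∀ e ∈ E, ∃ s ∈ e.powersetCard (t - 1), s ∈ S) ∧
          (S.card : ℝ) ≤ (2 * Real.log t / ((t : ℝ) - 1) + 1 / (t : ℝ)) *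
            ((blowVertices E (t - 1)).card : ℝ) := by
  refine ⟨4300, fun t ht V _ _ E hE => ?_⟩
  set r := numLabels t
  have : NeZero r := ⟨(numLabels_pos (by omega)).ne'⟩
  have hdensity : ∀ s ∈ blowVertices E (t - 1),
      (#{f : V → ZMod r | MissesLabelOrSumsToZero f s} : ℝ) ≤
        (r * (1 - 1 / (r : ℝ)) ^ (t - 1) + 1 / (r : ℝ)) * Fintype.card (V → ZMod r) := by
    intro s hs
    obtain ⟨e, he, hse⟩ := mem_biUnion.mp hs
    have hcard := (mem_powersetCard.mp hse).2
    have hs : s.Nonempty := card_pos.mp (by omega)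
    have := card_filter_missesLabelOrSumsToZero_le_mul_card (M := ZMod r) hs
    rwa [ZMod.card, hcard] at this
  obtain ⟨f, hf⟩ := exists_card_filter_le_of_forall_card_filter_le _ _ _ hdensity
  refine ⟨{s ∈ blowVertices E (t - 1) | MissesLabelOrSumsToZero f s}, filter_subset _ _,
    fun e he => ?_, hf.trans ?_⟩
  · obtain ⟨x, hx, hmiss⟩ :=
      exists_missesLabelOrSumsToZero_erase f (card_pos.mp (by rw [hE e he]; omega) : e.Nonempty)
    have hsub : e.erase x ∈ e.powersetCard (t - 1) :=
      mem_powersetCard.mpr ⟨erase_subset _ _, by rw [card_erase_of_mem hx, hE e he]⟩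
    exact ⟨e.erase x, hsub, mem_filter.mpr ⟨mem_biUnion.mpr ⟨e, he, hsub⟩, hmiss⟩⟩
  · refine mul_le_mul_of_nonneg_right ?_ (Nat.cast_nonneg _)
    rw [add_comm (2 * Real.log t / _)]
    exact add_le_add (numLabels_mul_one_sub_pow_le ht) (one_div_numLabels_le (by omega))
end

section
/- Let G be a t-uniform hypergraph on vertex set V, let P ≥ 1 be an integer, and let c : V → ℤ_P be any coloring. For each (t−1)-element subset v of V contained in an edge of G, define f(v) = Σ_{u∈v} c(u) mod P, and let U be the set of those (t−1)-element subsets v (contained in an edge of G) for which some color i ∈ ℤ_P satisfies c(u) ≠ i for all u ∈ v. Then for every p ∈ ℤ_P, the set U ∪ { v : f(v) = p } is a vertex cover of the (t−1)-blown-up hypergraph G^{(t−1)}. -/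
open Finset

/-- Let `G` be a `t`-uniform hypergraph on `V`, `P ≥ 1`, and `c : V → ℤ_P` a coloring.
For a `(t-1)`-element subset `s` let `f(s) = ∑_{u ∈ s} c(u)` and let `U` be the set of
those `s` missing some color. Then for every `p ∈ ℤ_P`, the set
`U ∪ {s : f(s) = p}` is a vertex cover of `G^{(t-1)}`: every blown-up edge
`powersetCard (t-1) e`, `e ∈ E`, contains a member of it. -/
theorem stmt5 (t P : ℕ) (hP : 1 ≤ P) (V : Type*) [Fintype V] [DecidableEq V]
    (E : Finset (Finset V)) (hunif : ∀ e ∈ E, e.card = t)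
    (c : V → ZMod P) (p : ZMod P) :
    ∀ e ∈ E, ∃ s ∈ e.powersetCard (t - 1),
      (∃ i : ZMod P, ∀ u ∈ s, c u ≠ i) ∨ (∑ u ∈ s, c u) = p := by
  intro e he
  have hte : e.card = t := hunif e he
  by_cases h : ∃ i : ZMod P, ∀ u ∈ e, c u ≠ i
  · obtain ⟨i, hi⟩ := h
    obtain ⟨s, hs, hcard⟩ := Finset.exists_subset_card_eq
      (show t - 1 ≤ e.card by omega)
    exact ⟨s, Finset.mem_powersetCard.2 ⟨hs, hcard⟩,
      Or.inl ⟨i, fun u hu => hi u (hs hu)⟩⟩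
  · push_neg at h
    obtain ⟨u, hu, hcu⟩ := h ((∑ x ∈ e, c x) - p)
    refine ⟨e.erase u, Finset.mem_powersetCard.2
      ⟨Finset.erase_subset _ _, by rw [Finset.card_erase_of_mem hu, hte]⟩, Or.inr ?_⟩
    have := Finset.sum_erase_add e c hu
    have : ∑ x ∈ e.erase u, c x = (∑ x ∈ e, c x) - c u := by
      rw [← this]; ring
    rw [this, hcu]; ring
end

section
/- Let H be a t-uniform hypergraph and let x be an optimal fractional vertex cover of H, i.e., a fractional vertex cover with Σ_v x_v = τ*(H). Then the support S = { v ∈ V(H) : x_v > 0 } satisfies |S| ≤ t · τ*(H). -/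
open Finset
open scoped Classical

/-- The minimum total weight of a fractional vertex cover of the hypergraph on the
finite vertex type `β` with edge set `E`. -/
noncomputable def hTauStar {β : Type*} [Fintype β] [DecidableEq β]
    (E : Finset (Finset β)) : ℝ :=
  sInf {w | ∃ x : β → ℝ, (∀ v, 0 ≤ x v) ∧ (∀ e ∈ E, 1 ≤ ∑ v ∈ e, x v) ∧ w = ∑ v, x v}

/-- If `x` is an optimal fractional vertex cover of a `t`-uniform hypergraph `H`
(so `∑ x = τ*(H)`), then its support `S = {v : x v > 0}` satisfies `|S| ≤ t·τ*(H)`. -/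
theorem stmt6 (t : ℕ) (V : Type*) [Fintype V] [DecidableEq V]
    (E : Finset (Finset V)) (hunif : ∀ e ∈ E, e.card = t)
    (x : V → ℝ) (hx0 : ∀ v, 0 ≤ x v) (hxc : ∀ e ∈ E, 1 ≤ ∑ v ∈ e, x v)
    (hopt : ∑ v, x v = hTauStar E) :
    (((Finset.univ.filter fun v => 0 < x v).card : ℝ)) ≤ (t : ℝ) * hTauStar E := by
  classical
  set S : Finset V := Finset.univ.filter fun v => 0 < x v with hSdef
  have hτ0 : 0 ≤ hTauStar E := by
    rw [← hopt]; exact Finset.sum_nonneg fun v _ => hx0 v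
  rcases S.eq_empty_or_nonempty with hSe | hSne
  · rw [hSe]
    simp
    positivity
  -- ε : minimum positive value on the support
  set ε : ℝ := S.inf' hSne x with hεdef
  have hεS : ∀ v ∈ S, ε ≤ x v := fun v hv => Finset.inf'_le x hv
  have hεpos : 0 < ε := by
    obtain ⟨v, hv, hveq⟩ := Finset.exists_mem_eq_inf' hSne x
    rw [hεdef, hveq]
    exact (Finset.mem_filter.mp hv).2
  -- the perturbed cover
  set y : V → ℝ := fun v => (1 + t * ε) * x v - (if v ∈ S then ε else 0) with hydef
  have hy0 : ∀ v, 0 ≤ y v := by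
    intro v
    by_cases hv : v ∈ S
    · have h1 : ε ≤ x v := hεS v hv
      have h2 : 0 ≤ (t : ℝ) * ε := by positivity
      simp only [hydef, hv, if_pos]
      nlinarith [hx0 v]
    · simp only [hydef, hv, if_neg, not_false_iff]
      have : 0 ≤ (1 + (t:ℝ) * ε) * x v := by
        have := hx0 v
        have h2 : 0 ≤ (t : ℝ) * ε := by positivity
        nlinarith
      simpa using this
  -- sum of the indicator term over a finset
  have hsum_ind : ∀ (e : Finset V),
      (∑ v ∈ e, (if v ∈ S then ε else 0)) = ((e ∩ S).card : ℝ) * ε := by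
    intro e
    rw [Finset.sum_ite_mem]
    simp [Finset.sum_const, mul_comm]
  have hyc : ∀ e ∈ E, 1 ≤ ∑ v ∈ e, y v := by
    intro e he
    have hsum : ∑ v ∈ e, y v
        = (1 + t * ε) * (∑ v ∈ e, x v) - ((e ∩ S).card : ℝ) * ε := by
      simp only [hydef]
      rw [Finset.sum_sub_distrib, hsum_ind, ← Finset.mul_sum]
    have hcard : ((e ∩ S).card : ℝ) ≤ (t : ℝ) := by
      have := Finset.card_le_card (Finset.inter_subset_left (s₁ := e) (s₂ := S))
      rw [hunif e he] at this
      exact_mod_cast this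
    have hA : 1 ≤ ∑ v ∈ e, x v := hxc e he
    rw [hsum]
    have h1 : ((e ∩ S).card : ℝ) * ε ≤ (t : ℝ) * ε :=
      mul_le_mul_of_nonneg_right hcard hεpos.le
    have h2 : (1 + (t:ℝ) * ε) * 1 ≤ (1 + (t:ℝ) * ε) * (∑ v ∈ e, x v) :=
      mul_le_mul_of_nonneg_left hA (by positivity)
    linarith
  -- total weight of y
  have hysum : ∑ v, y v = (1 + t * ε) * hTauStar E - (S.card : ℝ) * ε := by
    simp only [hydef, Finset.sum_sub_distrib]
    rw [← Finset.mul_sum, hopt, hsum_ind]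
    congr 2
    rw [Finset.univ_inter]
  -- optimality: τ* ≤ ∑ y
  have hbdd : BddBelow {w | ∃ x : V → ℝ,
      (∀ v, 0 ≤ x v) ∧ (∀ e ∈ E, 1 ≤ ∑ v ∈ e, x v) ∧ w = ∑ v, x v} := by
    refine ⟨0, ?_⟩
    rintro w ⟨z, hz0, -, rfl⟩
    exact Finset.sum_nonneg fun v _ => hz0 v
  have hle : hTauStar E ≤ ∑ v, y v := by
    apply csInf_le hbdd
    exact ⟨y, hy0, hyc, rfl⟩
  rw [hysum] at hle
  have : (S.card : ℝ) * ε ≤ (t : ℝ) * hTauStar E * ε := by nlinarith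
  have := le_of_mul_le_mul_right (by linarith : (S.card : ℝ) * ε ≤ ((t : ℝ) * hTauStar E) * ε) hεpos
  exact this
end

section
/- Let t ≥ 2, let G be a t-uniform hypergraph on vertex set V, and let E₀ be a subset of the edges of G; let H' be the t-uniform hypergraph whose edges are, for each e ∈ E₀, the set of all (t−1)-element subsets of e. Set t' = t/2 + 2√(t·ln t) and δ = √(4·ln t/(t−1)). Let S be a set of (t−1)-element subsets of V such that every edge of H' contains at least t' elements of S. Let c : V → {0,1} be any 2-coloring, let S' = { v ∈ S : some color i ∈ {0,1} satisfies |{u ∈ v : c(u) = i}| ≤ (1−δ)(t−1)/2 }, and for v ∈ S define f(v) = |{u ∈ v : c(u) = 1}| mod 2. Then for every p ∈ {0,1}, the set S' ∪ { v ∈ S : f(v) = p } is a vertex cover of H'. -/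
/-!
Fix an edge `e`. The parity of the `1`-colored vertices of the facet `e.erase u` is that of `e`
shifted by `c u`. If no facet in `S` has parity `p`, all vertices deleted to obtain facets in `S`
share one color, so that color occurs at least `t' ≥ t/2 + 2√(t ln t)` times in `e`, and the
other color occurs at most `t - t' ≤ (1 - δ)(t - 1)/2` times in any facet.
-/

open Finset

namespace ZMod

lemma natCast_card_filter_eq_one_eq_sum {V : Type*} (s : Finset V) (c : V → ZMod 2) :
    ((s.filter fun u => c u = 1).card : ZMod 2) = ∑ u ∈ s, c u := by
  rw [natCast_card_filter]
  refine sum_congr rfl fun u _ => ?_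
  generalize c u = a
  revert a; decide

end ZMod

namespace Finset

variable {V : Type*} [DecidableEq V]

/-- Deleting `u` from `e` shifts `∑ c` by `c u`, so if no facet `e.erase u ∈ A` has sum `p`,
every deleted vertex avoids the color `∑ u ∈ e, c u - p`. -/
lemma exists_color_card_filter_add_card_le (e : Finset V) (c : V → ZMod 2) (p : ZMod 2)
    (A : Finset (Finset V)) (hA : ∀ s ∈ A, s ⊆ e ∧ s.card + 1 = e.card)
    (hpar : ∀ s ∈ A, ∑ u ∈ s, c u ≠ p) :
    ∃ i : ZMod 2, ∀ s ⊆ e, (s.filter fun u => c u = i).card + A.card ≤ e.card := by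
  refine ⟨∑ u ∈ e, c u - p, fun s hse => ?_⟩
  set i := ∑ u ∈ e, c u - p
  have hAimage : A ⊆ (e.filter fun u => ¬c u = i).image e.erase := by
    intro a ha
    obtain ⟨u, hua, rfl⟩ := exists_eq_insert_iff.mpr (hA a ha)
    refine mem_image.mpr ⟨u, mem_filter.mpr ⟨mem_insert_self u a, fun hu => hpar _ ha ?_⟩,
      erase_insert hua⟩
    simp only [i, sum_insert hua] at hu
    linear_combination -hu
  have hcard := card_le_card hAimage |>.trans card_image_le
  have hs := card_le_card (filter_subset_filter (fun u => c u = i) hse)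
  have hsplit := card_filter_add_card_filter_not (s := e) (p := fun u => c u = i)
  omega

end Finset

namespace Real

lemma sub_half_add_two_sqrt_mul_log_le (t : ℝ) (ht : 2 ≤ t) :
    t - (t / 2 + 2 * √(t * log t)) ≤ (1 - √(4 * log t / (t - 1))) * (t - 1) / 2 := by
  have hL : 0 < log t := log_pos (by linarith)
  have ht1 : 0 < t - 1 := by linarith
  have hδ : √(4 * log t / (t - 1)) * (t - 1) = 2 * √(log t * (t - 1)) := by
    rw [show 4 * log t / (t - 1) = (2 * √(log t * (t - 1)) / (t - 1)) ^ 2 by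
      rw [div_pow, mul_pow, sq_sqrt (by positivity)]; field_simp; ring,
      sqrt_sq (by positivity), div_mul_cancel₀ _ ht1.ne']
  have hmono : √(log t * (t - 1)) ≤ √(t * log t) := sqrt_le_sqrt (by nlinarith)
  have hhalf : 1 / 2 ≤ √(t * log t) := by
    rw [le_sqrt (by norm_num) (by positivity)]
    have := one_sub_inv_le_log_of_pos (by linarith : 0 < t)
    have : t * (1 - t⁻¹) = t - 1 := by field_simp
    nlinarith
  nlinarith

end Real

theorem stmt8_general (t : ℕ) (ht : 2 ≤ t) (V : Type*) [DecidableEq V]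
    (E₀ : Finset (Finset V)) (hunif : ∀ e ∈ E₀, e.card = t)
    (S : Finset (Finset V))
    (hbig : ∀ e ∈ E₀,
      ((t : ℝ) / 2 + 2 * Real.sqrt ((t : ℝ) * Real.log t))
        ≤ (((e.powersetCard (t - 1)) ∩ S).card : ℝ))
    (c : V → ZMod 2) (p : ZMod 2) :
    ∀ e ∈ E₀, ∃ s ∈ e.powersetCard (t - 1), s ∈ S ∧
      ((∃ i : ZMod 2, (((s.filter fun u => c u = i).card : ℝ))
          ≤ (1 - Real.sqrt (4 * Real.log t / ((t : ℝ) - 1))) * ((t : ℝ) - 1) / 2) ∨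
        (((s.filter fun u => c u = 1).card : ZMod 2) = p)) := by
  intro e he
  set A := e.powersetCard (t - 1) ∩ S
  by_cases hparity : ∃ s ∈ A, ((s.filter fun u => c u = 1).card : ZMod 2) = p
  · obtain ⟨s, hsA, hs⟩ := hparity
    exact ⟨s, (mem_inter.mp hsA).1, (mem_inter.mp hsA).2, Or.inr hs⟩
  push Not at hparity
  have het := hunif e he
  have hfacet : ∀ s ∈ A, s ⊆ e ∧ s.card + 1 = e.card := fun s hs => by
    obtain ⟨hse, hcard⟩ := mem_powersetCard.mp (mem_inter.mp hs).1
    exact ⟨hse, by omega⟩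
  obtain ⟨i, hi⟩ := exists_color_card_filter_add_card_le e c p A hfacet
    fun s hs => ZMod.natCast_card_filter_eq_one_eq_sum s c ▸ hparity s hs
  have hA : (t : ℝ) / 2 + 2 * √(t * Real.log t) ≤ A.card := hbig e he
  obtain ⟨s, hsA⟩ : A.Nonempty := card_pos.mp <| by
    have := Real.sqrt_nonneg (t * Real.log t)
    have : (2 : ℝ) ≤ t := by exact_mod_cast ht
    exact_mod_cast (by linarith : (0 : ℝ) < A.card)
  refine ⟨s, (mem_inter.mp hsA).1, (mem_inter.mp hsA).2, Or.inl ⟨i, ?_⟩⟩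
  have hcount : ((s.filter fun u => c u = i).card : ℝ) + A.card ≤ t := by
    exact_mod_cast het ▸ hi s (hfacet s hsA).1
  linarith [Real.sub_half_add_two_sqrt_mul_log_le t (by exact_mod_cast ht)]

/-- Let `t ≥ 2`, let `E₀` be a set of `t`-element edges on `V`, and let `H'` have edges
`powersetCard (t-1) e` for `e ∈ E₀`. Set `t' = t/2 + 2√(t ln t)` and
`δ = √(4 ln t/(t-1))`. Suppose `S` is a set of `(t-1)`-element subsets of `V` such that
every edge of `H'` contains at least `t'` elements of `S`. For any 2-coloring
`c : V → {0,1}`, let `S'` be the members of `S` in which some color appears at most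
`(1-δ)(t-1)/2` times, and `f(s) = |{u ∈ s : c u = 1}| mod 2`. Then for every `p`,
`S' ∪ {s ∈ S : f s = p}` is a vertex cover of `H'`. -/
theorem stmt8 (t : ℕ) (ht : 2 ≤ t) (V : Type*) [DecidableEq V]
    (E₀ : Finset (Finset V)) (hunif : ∀ e ∈ E₀, e.card = t)
    (S : Finset (Finset V)) (hS : ∀ s ∈ S, s.card = t - 1)
    (hbig : ∀ e ∈ E₀,
      ((t : ℝ) / 2 + 2 * Real.sqrt ((t : ℝ) * Real.log t))
        ≤ (((e.powersetCard (t - 1)) ∩ S).card : ℝ))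
    (c : V → ZMod 2) (p : ZMod 2) :
    ∀ e ∈ E₀, ∃ s ∈ e.powersetCard (t - 1), s ∈ S ∧
      ((∃ i : ZMod 2, (((s.filter fun u => c u = i).card : ℝ))
          ≤ (1 - Real.sqrt (4 * Real.log t / ((t : ℝ) - 1))) * ((t : ℝ) - 1) / 2) ∨
        (((s.filter fun u => c u = 1).card : ZMod 2) = p)) :=
  stmt8_general t ht V E₀ hunif S hbig c p
end

section
/- Let t ≥ 2 and let F be a connected t-uniform hypergraph with at least two edges and no isolated vertices such that ρ(F) ≤ 1/(t−1). Then there exists a t-uniform hypergraph H such that F is isomorphic to the (t−1)-blown-up hypergraph H^{(t−1)}. -/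
/-!
Add the edges of `F` one at a time, each new edge `g` meeting the vertices `V` covered so far
(connectivity). Counting vertices, `ρ(F) ≤ 1/(t-1)` forces `|g ∩ V| = 1` at every step, so that
`|V| = (t-1)·#edges + 1` is maintained. Such a hypertree is a blow-up: if `g ∩ V = {x}` and `x`
corresponds to the `(t-1)`-set `S` of `H`, add the edge `S ∪ {z}` with a fresh vertex `z` to `H`,
and send the other `t-1` vertices of `g` to the `(t-1)`-subsets of `S ∪ {z}` containing `z`.
-/

open Finset

section

variable {α β γ : Type*}

theorem exists_injOn_image_eq [DecidableEq β] [Nonempty β] {s : Finset α} {u : Finset β}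
    (h : #s = #u) :
    ∃ σ : α → β, Set.InjOn σ s ∧ s.image σ = u := by
  obtain ⟨σ, hσ⟩ := s.finite_toSet.exists_bijOn_of_encard_eq (t := (u : Set β)) (by simp [h])
  exact ⟨σ, hσ.injOn, (image_eq_iff_bijOn_of_card h.le).2 hσ⟩

theorem eq_of_mem_powersetCard_insert [DecidableEq β] {z : β} {s u : Finset β}
    (hu : u ∈ (insert z s).powersetCard #s) (hzu : z ∉ u) : u = s := by
  rw [mem_powersetCard, subset_insert_iff_of_notMem hzu] at hu
  exact eq_of_subset_of_card_le hu.1 hu.2.ge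

variable [DecidableEq α] [DecidableEq β]

/-- `φ` is an isomorphism from the hypergraph with edge set `F` onto the blow-up `H^{(k)}` of the
`(k+1)`-uniform hypergraph `H`. -/
structure IsBlowUpIso (k : ℕ) (F : Finset (Finset α)) (H : Finset (Finset β))
    (φ : α → Finset β) : Prop where
  card_eq : ∀ e ∈ H, #e = k + 1
  injOn : Set.InjOn φ ↑(F.sup id)
  image_eq : F.image (·.image φ) = H.image (·.powersetCard k)

namespace IsBlowUpIso

variable {k : ℕ} {F : Finset (Finset α)} {H : Finset (Finset β)} {φ : α → Finset β}

theorem image_sup (h : IsBlowUpIso k F H φ) :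
    (F.sup id).image φ = H.biUnion (·.powersetCard k) := by
  calc (F.sup id).image φ = (F.image (·.image φ)).biUnion id := by
        rw [sup_eq_biUnion, biUnion_image, image_biUnion]; rfl
    _ = H.biUnion (·.powersetCard k) := by rw [h.image_eq, image_biUnion]; rfl

theorem subset_sup (h : IsBlowUpIso k F H φ) {a : α} (ha : a ∈ F.sup id) :
    φ a ⊆ H.sup id := by
  obtain ⟨e, he, hae⟩ := mem_biUnion.1 (h.image_sup ▸ mem_image_of_mem φ ha)
  exact (mem_powersetCard.1 hae).1.trans (le_sup (f := id) he)

theorem map [DecidableEq γ] (h : IsBlowUpIso k F H φ) (f : β ↪ γ) :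
    IsBlowUpIso k F (H.map (mapEmbedding f).toEmbedding) (fun a => (φ a).map f) where
  card_eq e he := by
    obtain ⟨e, he', rfl⟩ := mem_map.1 he
    simpa using h.card_eq e he'
  injOn a ha b hb hab := h.injOn ha hb (map_injective f hab)
  image_eq := by
    have := congrArg (fun S : Finset (Finset (Finset β)) => S.image (·.image (Finset.map f)))
      h.image_eq
    simp only [image_image] at this
    convert this using 1
    · exact image_congr fun e _ => by simp [map_eq_image, image_image, Function.comp_def]
    · rw [map_eq_image, image_image]
      refine image_congr fun e _ => ?_
      change powersetCard k (e.map f) = (powersetCard k e).image (Finset.map f)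
      rw [powersetCard_map, map_eq_image]
      rfl

theorem exists_singleton {g : Finset α} (hg : #g = k + 1) :
    ∃ φ : α → Finset (Fin (k + 1)), IsBlowUpIso k {g} {univ} φ := by
  obtain ⟨φ, hφ, himg⟩ := exists_injOn_image_eq (s := g)
    (u := (univ : Finset (Fin (k + 1))).powersetCard k) (by simp [hg])
  exact ⟨φ, by simp, by simpa using hφ, by simp [himg]⟩

theorem exists_insert (h : IsBlowUpIso k F H φ) {g : Finset α} (hg : #g = k + 1) {x : α}
    (hx : g ∩ F.sup id = {x}) {z : β} (hz : z ∉ H.sup id) :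
    ∃ φ' : α → Finset β, IsBlowUpIso k (insert g F) (insert (insert z (φ x)) H) φ' := by
  obtain ⟨hxg, hxF⟩ := mem_inter.1 (hx ▸ mem_singleton_self x : x ∈ g ∩ F.sup id)
  have hzφ : ∀ a ∈ F.sup id, z ∉ φ a := fun a ha hza => hz (h.subset_sup ha hza)
  have hφx : #(φ x) = k := by
    obtain ⟨e, -, hxe⟩ := mem_biUnion.1 (h.image_sup ▸ mem_image_of_mem φ hxF)
    exact (mem_powersetCard.1 hxe).2
  set enew := insert z (φ x)
  have hφx_mem : φ x ∈ enew.powersetCard k :=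
    mem_powersetCard.2 ⟨subset_insert _ _, hφx⟩
  obtain ⟨σ, hσ, hσimg⟩ := exists_injOn_image_eq (s := g.erase x)
    (u := (enew.powersetCard k).erase (φ x)) (by
      rw [card_erase_of_mem hxg, card_erase_of_mem hφx_mem, card_powersetCard,
        card_insert_of_notMem (hzφ x hxF), hφx, hg, Nat.choose_succ_self_right, Nat.add_sub_cancel])
  have hzσ : ∀ a ∈ g.erase x, z ∈ σ a := by
    intro a ha
    have hσa := mem_erase.1 (hσimg ▸ mem_image_of_mem σ ha)
    by_contra hza
    exact hσa.1 (eq_of_mem_powersetCard_insert (hφx ▸ hσa.2) hza)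
  have hdisj : Disjoint (g.erase x) (F.sup id) := by
    rw [disjoint_left]
    intro a ha haF
    exact (mem_erase.1 ha).1 (mem_singleton.1 (hx ▸ mem_inter.2 ⟨mem_of_mem_erase ha, haF⟩))
  set φ' := (g.erase x).piecewise σ φ
  have hφ'F : ∀ a ∈ F.sup id, φ' a = φ a := fun a ha =>
    piecewise_eq_of_notMem _ _ _ (disjoint_right.1 hdisj ha)
  have hφ'σ : ∀ a ∈ g.erase x, φ' a = σ a := fun a ha => piecewise_eq_of_mem _ _ _ ha
  have hφ'g : g.image φ' = enew.powersetCard k := by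
    rw [← insert_erase hxg, image_insert, hφ'F x hxF, image_congr fun a ha => hφ'σ a ha, hσimg,
      insert_erase hφx_mem]
  refine ⟨φ', ?_, ?_, ?_⟩
  · intro e he
    rcases mem_insert.1 he with rfl | he
    · rw [card_insert_of_notMem (hzφ x hxF), hφx]
    · exact h.card_eq e he
  · have hsup : (insert g F).sup id = g.erase x ∪ F.sup id := by
      rw [sup_insert, id, erase_union_of_mem hxF, sup_eq_union]
    rw [hsup, coe_union, Set.injOn_union (disjoint_coe.2 hdisj)]
    refine ⟨hσ.congr fun a ha => (hφ'σ a ha).symm, h.injOn.congr fun a ha => (hφ'F a ha).symm, ?_⟩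
    intro a ha b hb hab
    exact hzφ b hb (hφ'F b hb ▸ hab ▸ (hφ'σ a ha).symm ▸ hzσ a ha)
  · rw [image_insert, image_insert, hφ'g, ← h.image_eq]
    congr 1
    exact image_congr fun e he => image_congr fun a ha =>
      hφ'F a (le_sup (f := id) (mem_coe.1 he) ha)

end IsBlowUpIso

theorem card_sup_ge_of_rho_le {k : ℕ} (hk : 1 ≤ k) {F : Finset (Finset α)}
    (hunif : ∀ e ∈ F, #e = k + 1) (hF : 2 ≤ #F)
    (hrho : ((#F : ℝ) - 1) / ((#(F.sup id) : ℝ) - (k + 1)) ≤ 1 / k) :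
    k * #F + 1 ≤ #(F.sup id) := by
  obtain ⟨e₁, he₁, e₂, he₂, hne⟩ := one_lt_card.1 hF
  have hv : k + 1 < #(F.sup id) := by
    by_contra! hle
    have eq_sup : ∀ e ∈ F, e = F.sup id := fun e he =>
      eq_of_subset_of_card_le (le_sup (f := id) he) (hunif e he ▸ hle)
    exact hne ((eq_sup e₁ he₁).trans (eq_sup e₂ he₂).symm)
  have hv' : (0 : ℝ) < #(F.sup id) - (k + 1) := by
    rw [sub_pos]; exact_mod_cast hv
  rw [div_le_div_iff₀ hv' (by positivity)] at hrho
  have : ((k * #F + 1 : ℕ) : ℝ) ≤ #(F.sup id) := by push_cast; linarith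
  exact_mod_cast this

theorem card_inter_sup_eq_one {k : ℕ} {A : Finset (Finset α)} {g : Finset α} (hg : #g = k + 1)
    (hgA : g ∉ A) (hA : #(A.sup id) = k * #A + 1)
    (hsparse : k * #(insert g A) + 1 ≤ #((insert g A).sup id))
    (hmeet : ¬ Disjoint g (A.sup id)) :
    #(g ∩ A.sup id) = 1 ∧ #((insert g A).sup id) = k * #(insert g A) + 1 := by
  have hunion := card_union_add_card_inter g (A.sup id)
  have hpos : 0 < #(g ∩ A.sup id) := card_pos.2 (not_disjoint_iff_nonempty_inter.1 hmeet)
  rw [sup_insert, id, sup_eq_union, card_insert_of_notMem hgA, mul_add] at *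
  omega

theorem exists_isBlowUpIso_of_le_card {k : ℕ} {F : Finset (Finset α)}
    (hunif : ∀ e ∈ F, #e = k + 1)
    (hconn : ∀ A ⊆ F, A.Nonempty → A ≠ F → ¬ Disjoint (A.sup id) ((F \ A).sup id))
    (hsparse : ∀ F' ⊆ F, 2 ≤ #F' → k * #F' + 1 ≤ #(F'.sup id)) {m : ℕ} (hm : 1 ≤ m)
    (hmF : m ≤ #F) :
    ∃ A ⊆ F, #A = m ∧ #(A.sup id) = k * m + 1 ∧
      ∃ (n : ℕ) (H : Finset (Finset (Fin n))) (φ : α → Finset (Fin n)), IsBlowUpIso k A H φ := by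
  induction m, hm using Nat.le_induction with
  | base =>
    obtain ⟨g, hg⟩ := card_pos.1 hmF
    obtain ⟨φ, hφ⟩ := IsBlowUpIso.exists_singleton (hunif g hg)
    exact ⟨{g}, singleton_subset_iff.2 hg, card_singleton g, by simp [hunif g hg], k + 1, _, φ, hφ⟩
  | succ m hm ih =>
    obtain ⟨A, hAF, rfl, htight, n, H, φ, hφ⟩ := ih (by omega)
    obtain ⟨g, hg, hmeet⟩ : ∃ g ∈ F \ A, ¬ Disjoint (A.sup id) g := by
      simpa only [Finset.disjoint_sup_right, not_forall, exists_prop, id] using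
        hconn A hAF (card_pos.1 (by omega)) (by rintro rfl; omega)
    obtain ⟨hgF, hgA⟩ := mem_sdiff.1 hg
    have hgAF : insert g A ⊆ F := insert_subset hgF hAF
    obtain ⟨hinter, htight'⟩ := card_inter_sup_eq_one (hunif g hgF) hgA htight
      (hsparse _ hgAF (by rw [card_insert_of_notMem hgA]; omega)) (disjoint_comm.not.1 hmeet)
    obtain ⟨x, hx⟩ := card_eq_one.1 hinter
    obtain ⟨φ', hφ'⟩ := (hφ.map Fin.castSuccEmb).exists_insert (hunif g hgF) hx (z := Fin.last n)
      (by simp [Fin.castSucc_ne_last])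
    refine ⟨insert g A, hgAF, card_insert_of_notMem hgA, ?_, n + 1, _, φ', hφ'⟩
    rwa [card_insert_of_notMem hgA] at htight'

end

theorem stmt11_general (t : ℕ) (ht : 2 ≤ t) (α : Type*) [DecidableEq α]
    (F : Finset (Finset α)) (hunif : ∀ e ∈ F, e.card = t)
    (hm : 2 ≤ F.card)
    (hconn : ∀ A ⊆ F, A.Nonempty → A ≠ F → ¬ Disjoint (A.sup id) ((F \ A).sup id))
    (hrho : ∀ F' ⊆ F, 2 ≤ F'.card →
      ((F'.card : ℝ) - 1) / (((F'.sup id).card : ℝ) - (t : ℝ)) ≤ 1 / ((t : ℝ) - 1)) :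
    ∃ (n : ℕ) (EH : Finset (Finset (Fin n))),
      (∀ e ∈ EH, e.card = t) ∧
      ∃ φ : α → Finset (Fin n),
        Set.InjOn φ ↑(F.sup id) ∧
        (F.sup id).image φ = EH.biUnion (fun e => e.powersetCard (t - 1)) ∧
        F.image (fun e => e.image φ) = EH.image (fun e => e.powersetCard (t - 1)) := by
  obtain ⟨k, rfl⟩ : ∃ k, t = k + 1 := ⟨t - 1, by omega⟩
  have hsparse (F' : Finset (Finset α)) (hF' : F' ⊆ F) (h2 : 2 ≤ #F') :
      k * #F' + 1 ≤ #(F'.sup id) :=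
    card_sup_ge_of_rho_le (by omega) (fun e he => hunif e (hF' he)) h2 (by
      simpa using hrho F' hF' h2)
  obtain ⟨A, hAF, hA, -, n, H, φ, hφ⟩ :=
    exists_isBlowUpIso_of_le_card hunif hconn hsparse (m := #F) (by omega) le_rfl
  obtain rfl := eq_of_subset_of_card_le hAF hA.ge
  simp only [Nat.add_sub_cancel]
  exact ⟨n, H, hφ.card_eq, φ, hφ.injOn, hφ.image_sup, hφ.image_eq⟩

/-- Let `t ≥ 2` and let `F` be a connected `t`-uniform hypergraph with at least two
edges (represented by its edge set; its vertices are those covered by its edges, so it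
has no isolated vertices) such that `ρ(F) ≤ 1/(t-1)`, i.e. every subhypergraph `F'`
with at least two edges satisfies `(e'-1)/(v'-t) ≤ 1/(t-1)`. Then `F` is isomorphic to
the `(t-1)`-blown-up hypergraph `H^{(t-1)}` of some `t`-uniform hypergraph `H`. -/
theorem stmt11 (t : ℕ) (ht : 2 ≤ t) (α : Type*) [Fintype α] [DecidableEq α]
    (F : Finset (Finset α)) (hunif : ∀ e ∈ F, e.card = t)
    (hm : 2 ≤ F.card)
    (hconn : ∀ A ⊆ F, A.Nonempty → A ≠ F → ¬ Disjoint (A.sup id) ((F \ A).sup id))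
    (hrho : ∀ F' ⊆ F, 2 ≤ F'.card →
      ((F'.card : ℝ) - 1) / (((F'.sup id).card : ℝ) - (t : ℝ)) ≤ 1 / ((t : ℝ) - 1)) :
    ∃ (n : ℕ) (EH : Finset (Finset (Fin n))),
      (∀ e ∈ EH, e.card = t) ∧
      ∃ φ : α → Finset (Fin n),
        Set.InjOn φ ↑(F.sup id) ∧
        (F.sup id).image φ = EH.biUnion (fun e => e.powersetCard (t - 1)) ∧
        F.image (fun e => e.image φ) = EH.image (fun e => e.powersetCard (t - 1)) :=
  stmt11_general t ht α F hunif hm hconn hrho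
end

section
/- Let t ≥ 2 and let F be a connected t-uniform hypergraph with m ≥ 2 edges and no isolated vertices such that ρ(F) ≤ 1/(t−1). Then the edges of F can be ordered e₁, e₂, …, e_m so that for every j with 2 ≤ j ≤ m, |e_j ∩ (e₁ ∪ e₂ ∪ … ∪ e_{j−1})| = 1. -/
/-!
Order the edges so that each one meets an earlier one, which connectivity allows greedily.
If `c_j ≥ 1` is the number of vertices the `j`-th edge shares with the earlier ones, it adds
`t - c_j` new vertices, so `v = m t - ∑ c_j`. Applied to `F` itself, `ρ(F) ≤ 1/(t-1)` reads
`v ≥ m t - (m - 1)`, so the `m - 1` numbers `c_2, …, c_m` sum to at most `m - 1` and all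
equal `1`.
-/

open Finset

section Counting

variable {ι α : Type*} [DecidableEq α]

theorem card_sup_add_sum_card_inter_sup_Iio [Fintype ι] [LinearOrder ι]
    [LocallyFiniteOrderBot ι] (f : ι → Finset α) :
    #(univ.sup f) + ∑ i, #(f i ∩ (Iio i).sup f) = ∑ i, #(f i) := by
  have hnew : #(univ.sup f) = ∑ i, #(disjointed f i) := by
    rw [← Fintype.sup_disjointed, sup_eq_biUnion,
      card_biUnion ((disjoint_disjointed f).set_pairwise _)]
  rw [hnew, ← sum_add_distrib]
  exact sum_congr rfl fun i _ => card_sdiff_add_card_inter _ _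

theorem Finset.eq_one_of_one_le_of_sum_le_card {s : Finset ι} {c : ι → ℕ}
    (hpos : ∀ i ∈ s, 1 ≤ c i) (hsum : ∑ i ∈ s, c i ≤ #s) : ∀ i ∈ s, c i = 1 := by
  have hge : ∑ i ∈ s, 1 ≤ ∑ i ∈ s, c i := sum_le_sum hpos
  rw [sum_const, smul_eq_mul, mul_one] at hge
  have heq : ∑ i ∈ s, 1 = ∑ i ∈ s, c i := by
    rw [sum_const, smul_eq_mul, mul_one]
    omega
  exact fun i hi => ((sum_eq_sum_iff_of_le hpos).mp heq i hi).symm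

end Counting

section Ordering

variable {α : Type*} [DecidableEq α] {F : Finset (Finset α)}

def IsConnectedHypergraph (F : Finset (Finset α)) : Prop :=
  ∀ A ⊆ F, A.Nonempty → A ≠ F → ¬ Disjoint (A.sup id) ((F \ A).sup id)

theorem IsConnectedHypergraph.exists_mem_sdiff_not_disjoint (hconn : IsConnectedHypergraph F)
    {A : Finset (Finset α)} (hAF : A ⊆ F) (hA : A.Nonempty) (hne : A ≠ F) :
    ∃ e ∈ F \ A, ∃ a ∈ A, ¬ Disjoint e a := by
  have h := hconn A hAF hA hne
  simp only [Finset.disjoint_sup_left, Finset.disjoint_sup_right, id] at h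
  push Not at h
  obtain ⟨e, he, a, ha, hea⟩ := h
  exact ⟨e, he, a, ha, fun h => hea h.symm⟩

theorem IsConnectedHypergraph.exists_enumeration_meeting_earlier
    (hconn : IsConnectedHypergraph F) :
    ∀ k ≤ #F, ∃ en : Fin k → Finset α, (∀ i, en i ∈ F) ∧ Function.Injective en ∧
      ∀ j : Fin k, 0 < (j : ℕ) → ∃ i < j, ¬ Disjoint (en j) (en i) := by
  intro k
  induction k with
  | zero => exact fun _ => ⟨Fin.elim0, fun i => i.elim0, fun i => i.elim0, fun j => j.elim0⟩
  | succ k ih =>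
    intro hk
    obtain ⟨en, hmem, hinj, hmeet⟩ := ih (by omega)
    have hsub : univ.image en ⊆ F := image_subset_iff.mpr fun i _ => hmem i
    have hne : univ.image en ≠ F := by
      intro h
      have := congrArg card h
      rw [card_image_of_injective _ hinj, card_univ, Fintype.card_fin] at this
      omega
    obtain ⟨e, he, hnew⟩ :
        ∃ e ∈ F \ univ.image en, 0 < k → ∃ i, ¬ Disjoint e (en i) := by
      rcases Nat.eq_zero_or_pos k with rfl | hk0
      · obtain ⟨e, he⟩ := F.card_pos.mp (by omega)
        exact ⟨e, by simpa using he, fun h => absurd h (lt_irrefl 0)⟩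
      · obtain ⟨e, he, a, ha, hea⟩ := hconn.exists_mem_sdiff_not_disjoint hsub
          (univ_nonempty_iff.mpr ⟨⟨0, hk0⟩⟩ |>.image en) hne
        obtain ⟨i, -, rfl⟩ := mem_image.mp ha
        exact ⟨e, he, fun _ => ⟨i, hea⟩⟩
    rw [mem_sdiff, mem_image] at he
    refine ⟨Fin.snoc en e, fun i => ?_, Fin.snoc_injective_of_injective hinj ?_, fun j hj => ?_⟩
    · induction i using Fin.lastCases with
      | cast i => simpa using hmem i
      | last => simpa using he.1
    · rintro ⟨i, rfl⟩
      exact he.2 ⟨i, mem_univ i, rfl⟩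
    · induction j using Fin.lastCases with
      | cast j =>
        obtain ⟨i, hij, hdis⟩ := hmeet j (by simpa using hj)
        exact ⟨i.castSucc, Fin.castSucc_lt_castSucc_iff.mpr hij, by simpa using hdis⟩
      | last =>
        obtain ⟨i, hdis⟩ := hnew (by simpa using hj)
        exact ⟨i.castSucc, Fin.castSucc_lt_last i, by simpa using hdis⟩

end Ordering

section Density

variable {α : Type*} [DecidableEq α]

theorem lt_card_sup_of_forall_card_eq {F : Finset (Finset α)} {t : ℕ}
    (hunif : ∀ e ∈ F, #e = t) (hF : 1 < #F) : t < #(F.sup id) := by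
  obtain ⟨e₁, he₁, e₂, he₂, hne⟩ := one_lt_card.mp hF
  by_contra! hle
  have hfull : ∀ e ∈ F, e = F.sup id := fun e he =>
    eq_of_subset_of_card_le (le_sup (f := id) he) (by rw [hunif e he]; exact hle)
  exact hne ((hfull e₁ he₁).trans (hfull e₂ he₂).symm)

theorem mul_add_one_le_add_of_div_le_one_div {m t v : ℕ} (ht : 2 ≤ t) (hv : t < v)
    (h : ((m : ℝ) - 1) / ((v : ℝ) - t) ≤ 1 / ((t : ℝ) - 1)) : m * t + 1 ≤ v + m := by
  have hv' : (0 : ℝ) < v - t := sub_pos.mpr (by exact_mod_cast hv)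
  have ht' : (0 : ℝ) < t - 1 := sub_pos.mpr (by exact_mod_cast ht)
  rw [div_le_div_iff₀ hv' ht'] at h
  have : ((m * t + 1 : ℕ) : ℝ) ≤ (v + m : ℕ) := by push_cast; linarith
  exact_mod_cast this

theorem card_inter_sup_Iio_eq_one {m t : ℕ} (en : Fin m → Finset α)
    (hcard : ∀ i, #(en i) = t)
    (hmeet : ∀ j : Fin m, 0 < (j : ℕ) → ∃ i < j, ¬ Disjoint (en j) (en i))
    (hdense : m * t + 1 ≤ #(univ.sup en) + m) :
    ∀ j : Fin m, 0 < (j : ℕ) → #(en j ∩ (Iio j).sup en) = 1 := by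
  intro j hj
  set j₀ : Fin m := ⟨0, by omega⟩
  have hcount := card_sup_add_sum_card_inter_sup_Iio en
  simp only [hcard, sum_const, card_univ, Fintype.card_fin, smul_eq_mul] at hcount
  rw [← sum_erase_add _ _ (mem_univ j₀)] at hcount
  have h₀ : #(en j₀ ∩ (Iio j₀).sup en) = 0 := by
    rw [Iio_eq_empty.mpr (show IsMin j₀ from fun i _ => Nat.zero_le i), sup_empty,
      bot_eq_empty, inter_empty, card_empty]
  have hpos : ∀ i ∈ univ.erase j₀, 1 ≤ #(en i ∩ (Iio i).sup en) := by
    intro i hi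
    obtain ⟨k, hki, hdis⟩ :=
      hmeet i (by simpa [j₀, Fin.ext_iff, Nat.pos_iff_ne_zero] using hi)
    exact card_pos.mpr (not_disjoint_iff_nonempty_inter.mp fun h =>
      hdis (h.mono_right (le_sup (mem_Iio.mpr hki))))
  have hcard_erase : #(univ.erase j₀) = m - 1 := by simp
  exact eq_one_of_one_le_of_sum_le_card hpos (by omega) j
    (by simpa [j₀, Fin.ext_iff, Nat.pos_iff_ne_zero] using hj)

end Density

theorem stmt12_general (t : ℕ) (ht : 2 ≤ t) (α : Type*) [DecidableEq α]
    (F : Finset (Finset α)) (hunif : ∀ e ∈ F, e.card = t)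
    (hm : 2 ≤ F.card)
    (hconn : ∀ A ⊆ F, A.Nonempty → A ≠ F → ¬ Disjoint (A.sup id) ((F \ A).sup id))
    (hrho : ∀ F' ⊆ F, 2 ≤ F'.card →
      ((F'.card : ℝ) - 1) / (((F'.sup id).card : ℝ) - (t : ℝ)) ≤ 1 / ((t : ℝ) - 1)) :
    ∃ en : Fin F.card → Finset α,
      (∀ i, en i ∈ F) ∧ Function.Injective en ∧
      ∀ j : Fin F.card, 0 < (j : ℕ) →
        ((en j) ∩ ((Finset.univ.filter fun i => i < j).biUnion en)).card = 1 := by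
  obtain ⟨en, hmem, hinj, hmeet⟩ :=
    IsConnectedHypergraph.exists_enumeration_meeting_earlier hconn #F le_rfl
  have hrange : univ.image en = F :=
    eq_of_subset_of_card_le (image_subset_iff.mpr fun i _ => hmem i)
      (by rw [card_image_of_injective _ hinj, card_univ, Fintype.card_fin])
  have hsup : F.sup id = univ.sup en := calc
    F.sup id = (univ.image en).sup id := by rw [hrange]
    _ = univ.sup en := sup_image _ _ _
  have hdense := mul_add_one_le_add_of_div_le_one_div ht
    (lt_card_sup_of_forall_card_eq hunif hm) (hrho F Subset.rfl hm)
  rw [hsup] at hdense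
  refine ⟨en, hmem, hinj, fun j hj => ?_⟩
  rw [filter_gt_eq_Iio, ← sup_eq_biUnion]
  exact card_inter_sup_Iio_eq_one en (fun i => hunif _ (hmem i)) hmeet hdense j hj

/-- Let `t ≥ 2` and let `F` be a connected `t`-uniform hypergraph with `m ≥ 2` edges
(represented by its edge set; its vertices are those covered by its edges, so it has no
isolated vertices) such that `ρ(F) ≤ 1/(t-1)`, i.e. every subhypergraph `F'` with at
least two edges satisfies `(e'-1)/(v'-t) ≤ 1/(t-1)`. Then the edges of `F` can be
ordered `e₁, …, e_m` so that for `2 ≤ j ≤ m`, `|e_j ∩ (e₁ ∪ ⋯ ∪ e_{j-1})| = 1`. -/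
theorem stmt12 (t : ℕ) (ht : 2 ≤ t) (α : Type*) [Fintype α] [DecidableEq α]
    (F : Finset (Finset α)) (hunif : ∀ e ∈ F, e.card = t)
    (hm : 2 ≤ F.card)
    (hconn : ∀ A ⊆ F, A.Nonempty → A ≠ F → ¬ Disjoint (A.sup id) ((F \ A).sup id))
    (hrho : ∀ F' ⊆ F, 2 ≤ F'.card →
      ((F'.card : ℝ) - 1) / (((F'.sup id).card : ℝ) - (t : ℝ)) ≤ 1 / ((t : ℝ) - 1)) :
    ∃ en : Fin F.card → Finset α,
      (∀ i, en i ∈ F) ∧ Function.Injective en ∧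
      ∀ j : Fin F.card, 0 < (j : ℕ) →
        ((en j) ∩ ((Finset.univ.filter fun i => i < j).biUnion en)).card = 1 :=
  stmt12_general t ht α F hunif hm hconn hrho
end

section
/- Let n ≥ 2, let 𝓢 be a simple set family over the universe [n] (any two distinct sets of 𝓢 intersect in at most one element) whose union is [n], and let k be the minimum number of sets of 𝓢 whose union is [n]. Let T₁, …, T_m be a greedy sequence: for each i, T_i ∈ 𝓢 covers the maximum number of elements of [n] not covered by T₁ ∪ … ∪ T_{i−1} among all sets in 𝓢, each T_i covers at least one new element, and T₁ ∪ … ∪ T_m = [n]. Then m ≤ k·(ln n / 2 + 1). -/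
open Finset


noncomputable def Hr (t : ℕ) : ℝ := ((harmonic t : ℚ) : ℝ)

lemma Hr_eq (t : ℕ) : Hr t = ∑ j ∈ Finset.range t, (1:ℝ)/(j+1) := by
  simp [Hr, harmonic, one_div]

lemma Hr_zero : Hr 0 = 0 := by simp [Hr]

lemma Hr_one : Hr 1 = 1 := by simp [Hr, harmonic_succ]

lemma Hr_mono : Monotone Hr := by
  have h : ∀ t, Hr t ≤ Hr (t+1) := by
    intro t
    simp only [Hr, harmonic_succ]
    push_cast
    have : (0:ℝ) ≤ ((t:ℝ)+1)⁻¹ := by positivity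
    linarith
  exact monotone_nat_of_le_succ h

lemma Hr_nonneg (t : ℕ) : 0 ≤ Hr t := Hr_zero ▸ Hr_mono (Nat.zero_le t)

lemma one_le_Hr {t : ℕ} (ht : 1 ≤ t) : 1 ≤ Hr t := Hr_one ▸ Hr_mono ht

lemma Hr_le_one_add_log (t : ℕ) : Hr t ≤ 1 + Real.log t := harmonic_le_one_add_log t

lemma Hr_chunk (c r g : ℕ) (hcr : c ≤ r) (hrg : r ≤ g) (hg : 0 < g) :
    (c:ℝ)/g ≤ Hr r - Hr (r - c) := by
  rw [Hr_eq, Hr_eq, ← Finset.sum_range_add_sum_Ico _ (Nat.sub_le r c), add_sub_cancel_left]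
  have h1 : ∀ j ∈ Finset.Ico (r-c) r, (1:ℝ)/g ≤ 1/(j+1) := by
    intro j hj
    rw [Finset.mem_Ico] at hj
    apply one_div_le_one_div_of_le
    · positivity
    · have : j + 1 ≤ g := by omega
      exact_mod_cast this
  calc (c:ℝ)/g = (Finset.Ico (r-c) r).card • ((1:ℝ)/g) := by
        rw [Nat.card_Ico]
        have : r - (r - c) = c := by omega
        rw [this, nsmul_eq_mul]
        ring
    _ ≤ ∑ j ∈ Finset.Ico (r-c) r, (1:ℝ)/(j+1) := Finset.card_nsmul_le_sum _ _ _ h1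

set_option maxHeartbeats 2000000 in
/-- Greedy set cover on simple set systems: if `𝓢` is a simple set family covering
`[n]` (`n ≥ 2`), `k` is the minimum number of sets of `𝓢` covering `[n]`, and
`T 0, …, T (m-1)` is a greedy cover (each `T i` covers the maximum number of
yet-uncovered elements, covers at least one new element, and all of `[n]` ends up
covered), then `m ≤ k·(ln n / 2 + 1)`. -/
theorem stmt13 (n : ℕ) (hn : 2 ≤ n) (𝓢 : Finset (Finset (Fin n)))
    (hsimple : ∀ S ∈ 𝓢, ∀ S' ∈ 𝓢, S ≠ S' → (S ∩ S').card ≤ 1)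
    (hcover : 𝓢.biUnion id = Finset.univ)
    (k : ℕ)
    (hk : ∃ 𝓣 ⊆ 𝓢, 𝓣.biUnion id = Finset.univ ∧ 𝓣.card = k)
    (hkmin : ∀ 𝓣 ⊆ 𝓢, 𝓣.biUnion id = Finset.univ → k ≤ 𝓣.card)
    (m : ℕ) (T : Fin m → Finset (Fin n))
    (hT : ∀ i, T i ∈ 𝓢)
    (hgreedy : ∀ i : Fin m, ∀ S ∈ 𝓢,
      (S \ (Finset.univ.filter fun j => j < i).biUnion T).card
        ≤ (T i \ (Finset.univ.filter fun j => j < i).biUnion T).card)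
    (hnew : ∀ i : Fin m, (T i \ (Finset.univ.filter fun j => j < i).biUnion T).Nonempty)
    (hall : Finset.univ.biUnion T = Finset.univ) :
    (m : ℝ) ≤ (k : ℝ) * (Real.log n / 2 + 1) := by
  classical
  obtain ⟨𝓣, h𝓣S, h𝓣cov, h𝓣k⟩ := hk
  have hx0 : (⟨0, by omega⟩ : Fin n) ∈ Finset.univ := Finset.mem_univ _
  -- k ≥ 1
  have hk1 : 1 ≤ k := by
    by_contra h
    have hk0 : k = 0 := by omega
    rw [hk0, Finset.card_eq_zero] at h𝓣k
    rw [h𝓣k] at h𝓣cov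
    simp at h𝓣cov
    rw [← h𝓣cov] at hx0
    exact absurd hx0 (Finset.notMem_empty _)
  -- k ≤ n
  have hkn : k ≤ n := by
    have hex : ∀ x : Fin n, ∃ S, S ∈ 𝓢 ∧ x ∈ S := by
      intro x
      have : x ∈ 𝓢.biUnion id := by rw [hcover]; exact Finset.mem_univ x
      simpa using Finset.mem_biUnion.mp this
    choose G hG1 hG2 using hex
    have h1 : Finset.univ.image G ⊆ 𝓢 := by
      intro S hS
      obtain ⟨x, -, rfl⟩ := Finset.mem_image.mp hS
      exact hG1 x
    have h2 : (Finset.univ.image G).biUnion id = Finset.univ := by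
      apply Finset.eq_univ_of_forall
      intro x
      exact Finset.mem_biUnion.mpr ⟨G x, Finset.mem_image_of_mem G (Finset.mem_univ x), hG2 x⟩
    calc k ≤ (Finset.univ.image G).card := hkmin _ h1 h2
      _ ≤ (Finset.univ : Finset (Fin n)).card := Finset.card_image_le
      _ = n := by simp
  -- partition choice
  have hexT : ∀ x : Fin n, ∃ S, S ∈ 𝓣 ∧ x ∈ S := by
    intro x
    have : x ∈ 𝓣.biUnion id := by rw [h𝓣cov]; exact Finset.mem_univ x
    simpa using Finset.mem_biUnion.mp this
  choose F hF1 hF2 using hexT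
  set prev : ℕ → Finset (Fin n) := fun i =>
    (Finset.univ.filter fun j : Fin m => (j:ℕ) < i).biUnion T with hprev
  set B : Finset (Fin n) → Finset (Fin n) := fun S =>
    Finset.univ.filter fun x => F x = S with hB
  set r : Finset (Fin n) → ℕ → ℕ := fun S i => (B S \ prev i).card with hr
  set f : ℕ → ℝ := fun t => Hr (min t k) with hf
  set Φ : ℕ → ℝ := fun i => ∑ S ∈ 𝓣, f (r S i) with hΦ
  have hBS : ∀ S, B S ⊆ S := by
    intro S x hx
    rw [hB, Finset.mem_filter] at hx
    exact hx.2 ▸ hF2 x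
  have hprevFin : ∀ (i : ℕ) (hi : i < m),
      (Finset.univ.filter fun j => j < (⟨i, hi⟩ : Fin m)).biUnion T = prev i :=
    fun _ _ => rfl
  have hprev_mono : ∀ i j : ℕ, i ≤ j → prev i ⊆ prev j := by
    intro i j hij x hx
    rw [hprev, Finset.mem_biUnion] at hx ⊢
    obtain ⟨a, ha, hxa⟩ := hx
    rw [Finset.mem_filter] at ha
    exact ⟨a, Finset.mem_filter.mpr ⟨ha.1, lt_of_lt_of_le ha.2 hij⟩, hxa⟩
  have hprev_succ : ∀ (i : ℕ) (hi : i < m), prev (i+1) = prev i ∪ T ⟨i, hi⟩ := by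
    intro i hi
    ext x
    simp only [hprev, Finset.mem_biUnion, Finset.mem_filter, Finset.mem_union, Finset.mem_univ,
      true_and]
    constructor
    · rintro ⟨j, hj, hxj⟩
      rcases Nat.lt_or_ge (j:ℕ) i with h | h
      · exact Or.inl ⟨j, h, hxj⟩
      · have : j = ⟨i, hi⟩ := Fin.ext (by simp only [Fin.val_mk]; omega)
        exact Or.inr (this ▸ hxj)
    · rintro (⟨j, hj, hxj⟩ | hx)
      · exact ⟨j, Nat.lt_succ_of_lt hj, hxj⟩
      · exact ⟨⟨i, hi⟩, Nat.lt_succ_of_le (le_refl i), hx⟩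
  have hprev_zero : prev 0 = ∅ := by
    simp only [hprev]
    simp
  have hprev_m : prev m = Finset.univ := by
    apply Finset.eq_univ_of_forall
    intro x
    have : x ∈ Finset.univ.biUnion T := by rw [hall]; exact Finset.mem_univ x
    obtain ⟨j, -, hxj⟩ := Finset.mem_biUnion.mp this
    rw [hprev, Finset.mem_biUnion]
    exact ⟨j, Finset.mem_filter.mpr ⟨Finset.mem_univ _, j.isLt⟩, hxj⟩
  -- the key decreasing step
  have key : ∀ (i : ℕ) (hi : i < m), Φ (i+1) + 1 ≤ Φ i := by
    intro i hi
    set ii : Fin m := ⟨i, hi⟩ with hii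
    set D : Finset (Fin n) := T ii \ prev i with hD
    have hg0 : 0 < D.card := by
      have h := hnew ii
      rw [hii, hprevFin i hi] at h
      rw [hD, hii]
      exact Finset.card_pos.mpr h
    have hrsucc : ∀ S, B S \ prev (i+1) = (B S \ prev i) \ D := by
      intro S
      rw [hprev_succ i hi]
      ext x
      simp only [Finset.mem_sdiff, Finset.mem_union, hD]
      tauto
    have hrmono : ∀ S, r S (i+1) ≤ r S i := by
      intro S
      rw [hr]
      exact Finset.card_le_card
        (Finset.sdiff_subset_sdiff (le_refl _) (hprev_mono i (i+1) (by omega)))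
    by_cases hA : ∃ S₀, S₀ ∈ 𝓣 ∧ T ii = S₀ ∧ r S₀ i ≠ 0
    · obtain ⟨S₀, hS₀mem, hTS₀, hr₀⟩ := hA
      have hdrop0 : r S₀ (i+1) = 0 := by
        simp only [hr, Finset.card_eq_zero, Finset.sdiff_eq_empty_iff_subset]
        calc B S₀ ⊆ S₀ := hBS S₀
          _ ⊆ prev (i+1) := by
            rw [hprev_succ i hi, ← hTS₀]
            exact Finset.subset_union_right
      have h1 : (1:ℝ) ≤ f (r S₀ i) - f (r S₀ (i+1)) := by
        rw [hdrop0]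
        have : f 0 = 0 := by simp only [hf]; simp [Hr_zero]
        rw [this, sub_zero]
        simp only [hf]
        exact one_le_Hr (by omega)
      have hterms : ∀ S ∈ 𝓣, (0:ℝ) ≤ f (r S i) - f (r S (i+1)) := by
        intro S _
        have := Hr_mono (min_le_min_right k (hrmono S))
        simp only [hf]
        simpa using this
      have hsum : (1:ℝ) ≤ ∑ S ∈ 𝓣, (f (r S i) - f (r S (i+1))) :=
        le_trans h1 (Finset.single_le_sum hterms hS₀mem)
      rw [Finset.sum_sub_distrib] at hsum
      simp only [hΦ]
      linarith
    · push_neg at hA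
      set c : Finset (Fin n) → ℕ := fun S => ((B S \ prev i) ∩ D).card with hc
      have hrc : ∀ S, r S (i+1) = r S i - c S := by
        intro S
        simp only [hr, hrsucc S, hc]
        have := Finset.card_inter_add_card_sdiff (B S \ prev i) D
        omega
      have hcr : ∀ S, c S ≤ r S i := by
        intro S
        simp only [hc, hr]
        exact Finset.card_le_card Finset.inter_subset_left
      have hc1 : ∀ S ∈ 𝓣, c S ≤ 1 := by
        intro S hS
        by_cases hTS : T ii = S
        · have h0 : r S i = 0 := hA S hS hTS
          simp only [hr, Finset.card_eq_zero] at h0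
          simp only [hc, h0]
          simp
        · have hsub : (B S \ prev i) ∩ D ⊆ S ∩ T ii := by
            intro x hx
            rw [Finset.mem_inter] at hx ⊢
            refine ⟨hBS S (Finset.mem_sdiff.mp hx.1).1, ?_⟩
            have hx2 : x ∈ T ii \ prev i := hx.2
            exact (Finset.mem_sdiff.mp hx2).1
          calc c S ≤ (S ∩ T ii).card := Finset.card_le_card hsub
            _ ≤ 1 := hsimple S (h𝓣S hS) (T ii) (hT ii) (fun h => hTS h.symm)
      have hcsum : ∑ S ∈ 𝓣, c S = D.card := by
        have hfib : ∀ S, (B S \ prev i) ∩ D = D.filter fun x => F x = S := by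
          intro S
          ext x
          simp only [Finset.mem_inter, Finset.mem_sdiff, Finset.mem_filter, hB, hD,
            Finset.mem_univ, true_and]
          tauto
        have := Finset.card_eq_sum_card_fiberwise
          (f := F) (s := D) (t := 𝓣) (fun x _ => hF1 x)
        rw [this]
        exact Finset.sum_congr rfl fun S _ => by simp only [hc]; rw [hfib S]
      have hgk : D.card ≤ k := by
        calc D.card = ∑ S ∈ 𝓣, c S := hcsum.symm
          _ ≤ ∑ S ∈ 𝓣, 1 := Finset.sum_le_sum hc1
          _ = k := by rw [Finset.sum_const, smul_eq_mul, mul_one, h𝓣k]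
      have hrg : ∀ S ∈ 𝓣, r S i ≤ D.card := by
        intro S hS
        calc r S i ≤ (S \ prev i).card := by
              simp only [hr]
              exact Finset.card_le_card (Finset.sdiff_subset_sdiff (hBS S) (le_refl _))
          _ ≤ D.card := by
              have h := hgreedy ii S (h𝓣S hS)
              rw [hii, hprevFin i hi] at h
              rw [hD, hii]
              exact h
      have hterm : ∀ S ∈ 𝓣, (c S : ℝ)/(D.card) ≤ f (r S i) - f (r S (i+1)) := by
        intro S hS
        have h1 : min (r S i) k = r S i := min_eq_left (le_trans (hrg S hS) hgk)
        have h2 : min (r S (i+1)) k = r S (i+1) :=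
          min_eq_left (le_trans (hrmono S) (le_trans (hrg S hS) hgk))
        simp only [hf, h1, h2]
        rw [hrc S]
        exact Hr_chunk (c S) (r S i) D.card (hcr S) (hrg S hS) hg0
      have hsum : (1:ℝ) ≤ ∑ S ∈ 𝓣, (f (r S i) - f (r S (i+1))) := by
        calc (1:ℝ) = (D.card : ℝ)/(D.card) := by
              rw [div_self]
              exact Nat.cast_ne_zero.mpr hg0.ne'
          _ = ∑ S ∈ 𝓣, (c S : ℝ)/(D.card) := by
              rw [← Finset.sum_div]
              congr 1
              rw [← hcsum]
              push_cast
              rfl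
          _ ≤ _ := Finset.sum_le_sum hterm
      rw [Finset.sum_sub_distrib] at hsum
      simp only [hΦ]
      linarith
  -- Φ m = 0
  have hΦm : Φ m = 0 := by
    simp only [hΦ]
    apply Finset.sum_eq_zero
    intro S _
    have : r S m = 0 := by
      simp only [hr, hprev_m]
      simp
    rw [this]
    simp only [hf]
    simp [Hr_zero]
  -- induction: m ≤ Φ 0
  have hind : ∀ i, i ≤ m → (i:ℝ) + Φ i ≤ Φ 0 := by
    intro i
    induction i with
    | zero => intro _; simp
    | succ i ih =>
      intro h
      have hi : i < m := h
      have h1 := key i hi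
      have h2 := ih (le_of_lt hi)
      push_cast
      linarith
  have hmΦ : (m:ℝ) ≤ Φ 0 := by
    have := hind m le_rfl
    rw [hΦm] at this
    linarith
  -- evaluate Φ 0 and bound it
  have hΦ0 : Φ 0 = ∑ S ∈ 𝓣, Hr (min (B S).card k) := by
    simp only [hΦ, hf, hr, hprev_zero, Finset.sdiff_empty]
  have hbsum : ∑ S ∈ 𝓣, (B S).card = n := by
    have := Finset.card_eq_sum_card_fiberwise
      (f := F) (s := (Finset.univ : Finset (Fin n))) (t := 𝓣) (fun x _ => hF1 x)
    rw [Finset.card_univ, Fintype.card_fin] at this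
    rw [← this]
  have hn1 : (1:ℝ) ≤ (n:ℝ) := by exact_mod_cast Nat.one_le_of_lt hn
  have hkpos : (0:ℝ) < (k:ℝ) := by exact_mod_cast hk1
  have hnpos : (0:ℝ) < (n:ℝ) := by linarith
  have hfinal : ∑ S ∈ 𝓣, Hr (min (B S).card k) ≤ (k:ℝ) * (Real.log n / 2 + 1) := by
    by_cases hcase : k * k ≤ n
    · -- k ≤ √n : pointwise bound by Hr k ≤ 1 + log k ≤ 1 + log n / 2
      have hlogk : Real.log k ≤ Real.log n / 2 := by
        have h1 : Real.log ((k:ℝ) * k) ≤ Real.log n := by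
          apply Real.log_le_log (by positivity)
          exact_mod_cast hcase
        rw [Real.log_mul (by positivity) (by positivity)] at h1
        linarith
      have hterm : ∀ S ∈ 𝓣, Hr (min (B S).card k) ≤ Real.log n / 2 + 1 := by
        intro S _
        calc Hr (min (B S).card k) ≤ Hr k := Hr_mono (min_le_right _ _)
          _ ≤ 1 + Real.log k := Hr_le_one_add_log k
          _ ≤ Real.log n / 2 + 1 := by linarith
      calc ∑ S ∈ 𝓣, Hr (min (B S).card k) ≤ ∑ S ∈ 𝓣, (Real.log n / 2 + 1) :=
            Finset.sum_le_sum hterm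
        _ = (k:ℝ) * (Real.log n / 2 + 1) := by
            rw [Finset.sum_const, h𝓣k, nsmul_eq_mul]
    · -- k ≥ √n : tangent-line bound
      push_neg at hcase
      have hlogk : Real.log n / 2 ≤ Real.log k := by
        have h1 : Real.log n ≤ Real.log ((k:ℝ) * k) := by
          apply Real.log_le_log hnpos
          exact_mod_cast le_of_lt hcase
        rw [Real.log_mul (by positivity) (by positivity)] at h1
        linarith
      have hterm : ∀ S ∈ 𝓣, Hr (min (B S).card k)
          ≤ (Real.log n - Real.log k) + (k:ℝ)/n * (B S).card := by
        intro S _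
        by_cases hb : (B S).card = 0
        · rw [hb]
          simp only [Nat.cast_zero, mul_zero, add_zero, Nat.zero_min]
          rw [Hr_zero]
          have : Real.log k ≤ Real.log n := by
            apply Real.log_le_log hkpos
            exact_mod_cast hkn
          linarith
        · have hb1 : 1 ≤ (B S).card := Nat.one_le_iff_ne_zero.mpr hb
          have hbpos : (0:ℝ) < ((B S).card : ℝ) := by exact_mod_cast hb1
          have h1 : Hr (min (B S).card k) ≤ 1 + Real.log ((B S).card) := by
            calc Hr (min (B S).card k) ≤ Hr ((B S).card) := Hr_mono (min_le_left _ _)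
              _ ≤ 1 + Real.log ((B S).card) := Hr_le_one_add_log _
          have h2 : Real.log (((B S).card : ℝ) * k / n) ≤ ((B S).card : ℝ) * k / n - 1 :=
            Real.log_le_sub_one_of_pos (by positivity)
          rw [Real.log_div (by positivity) (by positivity),
            Real.log_mul (by positivity) (by positivity)] at h2
          have : (k:ℝ)/n * (B S).card = ((B S).card : ℝ) * k / n := by ring
          rw [this]
          linarith
      have hsumb : ∑ S ∈ 𝓣, ((B S).card : ℝ) = (n:ℝ) := by
        rw [← Nat.cast_sum]
        exact_mod_cast congrArg (Nat.cast : ℕ → ℝ) hbsum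
      calc ∑ S ∈ 𝓣, Hr (min (B S).card k)
          ≤ ∑ S ∈ 𝓣, ((Real.log n - Real.log k) + (k:ℝ)/n * (B S).card) :=
            Finset.sum_le_sum hterm
        _ = (k:ℝ) * (Real.log n - Real.log k) + (k:ℝ)/n * (n:ℝ) := by
            rw [Finset.sum_add_distrib, Finset.sum_const, h𝓣k, nsmul_eq_mul,
              ← Finset.mul_sum, hsumb]
        _ ≤ (k:ℝ) * (Real.log n / 2) + (k:ℝ) := by
            have h3 : (k:ℝ)/n * n = k := by field_simp
            have h4 : (k:ℝ) * (Real.log n - Real.log k) ≤ (k:ℝ) * (Real.log n / 2) := by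
              apply mul_le_mul_of_nonneg_left _ (le_of_lt hkpos)
              linarith
            linarith
        _ = (k:ℝ) * (Real.log n / 2 + 1) := by ring
  calc (m:ℝ) ≤ Φ 0 := hmΦ
    _ = ∑ S ∈ 𝓣, Hr (min (B S).card k) := hΦ0
    _ ≤ (k:ℝ) * (Real.log n / 2 + 1) := hfinal
end

section
/- For every integer k ≥ 2 there exists a simple set family 𝓢 over the universe [k²] (any two distinct sets of 𝓢 intersect in at most one element) such that some k sets of 𝓢 have union [k²], yet there is a greedy execution (a sequence T₁, …, T_m of sets of 𝓢 in which each T_i covers the maximum number of yet-uncovered elements among all sets in 𝓢, continuing until all of [k²] is covered) whose length m exceeds (k−1)·ln k. -/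
open Finset

/-!
Number the cells of `[k²]` row by row, `p = q * k + e` with row `q` and column `e`; the `k`
columns are an optimal cover. Greedy is steered to pick consecutive segments: a segment starting
in row `q` has length `k - q`, which is exactly the number of cells every column still has
uncovered, so it is a legal greedy choice. A segment meets each column at most once and distinct
segments are disjoint, so the family is simple.

To count the segments, charge cell `(q, e)` with `1 / (k - q + 1)` if `e + q < k` and with
`1 / (k - q)` otherwise. A segment starting in row `q` reaches into row `q + 1` only at columns
`e < k - q - 1`, where the charge is `1 / (k - q)`, so each segment carries charge at most `1`.
Row `q` carries more than `(k - 1) / (k - q)`, so all rows carry more than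
`(k - 1) H_k ≥ (k - 1) log k`.
-/

def finIco (n a b : ℕ) : Finset (Fin n) := univ.filter fun p => a ≤ p.val ∧ p.val < b

@[simp]
lemma mem_finIco {n a b : ℕ} {p : Fin n} : p ∈ finIco n a b ↔ a ≤ p.val ∧ p.val < b := by
  simp [finIco]

lemma card_finIco {n a b : ℕ} (hb : b ≤ n) : #(finIco n a b) = b - a := by
  have hmem : ∀ x ∈ Ico a b, x < n := fun x hx => (mem_Ico.1 hx).2.trans_le hb
  rw [show finIco n a b = (Ico a b).attachFin hmem by ext; simp, card_attachFin, Nat.card_Ico]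

lemma finIco_zero_eq_univ_iff {n b : ℕ} : finIco n 0 b = univ ↔ n ≤ b := by
  refine ⟨fun h => ?_, fun h => ?_⟩
  · by_contra! hb
    simpa using h.ge (mem_univ (⟨b, hb⟩ : Fin n))
  · ext p
    simpa using p.isLt.trans_le h

lemma exists_mem_Ico_of_lt {g : ℕ → ℕ} {p : ℕ} (h0 : g 0 ≤ p) :
    ∀ {i}, p < g i → ∃ j < i, g j ≤ p ∧ p < g (j + 1)
  | 0, hp => absurd h0 (not_le.2 hp)
  | i + 1, hp => by
    by_cases hi : p < g i
    · obtain ⟨j, hj, hjp⟩ := exists_mem_Ico_of_lt h0 hi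
      exact ⟨j, by omega, hjp⟩
    · exact ⟨i, by omega, not_lt.1 hi, hp⟩

lemma biUnion_finIco_consecutive {n m i : ℕ} {g : ℕ → ℕ} (hg : Monotone g) (h0 : g 0 = 0)
    (hi : i ≤ m) :
    ((univ : Finset (Fin m)).filter fun j => j.val < i).biUnion
        (fun j => finIco n (g j) (g (j + 1))) = finIco n 0 (g i) := by
  ext p
  simp only [mem_biUnion, mem_filter, mem_univ, true_and, mem_finIco, zero_le]
  constructor
  · rintro ⟨j, hj, -, hp⟩
    exact hp.trans_le (hg hj)
  · intro hp
    obtain ⟨j, hj, hjp⟩ := exists_mem_Ico_of_lt (h0.trans_le p.val.zero_le) hp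
    exact ⟨⟨j, by omega⟩, hj, hjp⟩

lemma sum_range_le_of_sum_Ico_le_one {f : ℕ → ℝ} {g : ℕ → ℕ} (hg : Monotone g)
    (h0 : g 0 = 0) (hstep : ∀ t, ∑ p ∈ Ico (g t) (g (t + 1)), f p ≤ 1) (n : ℕ) :
    ∑ p ∈ range (g n), f p ≤ n := by
  induction n with
  | zero => simp [h0]
  | succ n ih =>
    rw [range_eq_Ico, ← sum_Ico_consecutive f (g n).zero_le (hg n.le_succ), ← range_eq_Ico]
    push_cast
    linarith [hstep n]

lemma eq_of_mod_eq_of_mem_Ico {k c x y : ℕ} (hx : x ∈ Ico c (c + k)) (hy : y ∈ Ico c (c + k))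
    (hxy : x % k = y % k) : x = y := by
  rw [mem_Ico] at hx hy
  exact Nat.ModEq.eq_of_abs_lt hxy (by rw [abs_sub_lt_iff]; omega)

lemma sum_range_mul (f : ℕ → ℝ) (a k : ℕ) :
    ∑ p ∈ range (a * k), f p = ∑ q ∈ range a, ∑ e ∈ range k, f (q * k + e) := by
  induction a with
  | zero => simp
  | succ a ih => rw [Nat.succ_mul, sum_range_add, ih, sum_range_succ]

def coveredAfter (k : ℕ) : ℕ → ℕ
  | 0 => 0
  | t + 1 => coveredAfter k t + (k - coveredAfter k t / k)

namespace coveredAfter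

variable {k : ℕ}

lemma succ_eq (t : ℕ) : coveredAfter k (t + 1) = coveredAfter k t + (k - coveredAfter k t / k) :=
  rfl

lemma monotone : Monotone (coveredAfter k) :=
  monotone_nat_of_le_succ fun t => (succ_eq t).symm ▸ Nat.le_add_right _ _

lemma succ_le_add (t : ℕ) : coveredAfter k (t + 1) ≤ coveredAfter k t + k := by
  rw [succ_eq]; exact Nat.add_le_add_left (Nat.sub_le _ _) _

lemma add_sub_div_le_mul_self {c : ℕ} (hc : c ≤ k * k) : c + (k - c / k) ≤ k * k := by
  rcases k.eq_zero_or_pos with rfl | hk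
  · simp_all
  have hdiv := Nat.div_add_mod c k
  have hmod := Nat.mod_lt c hk
  generalize c / k = q at *
  generalize c % k = r at *
  rcases Nat.lt_or_ge (q + 1) k with h | h
  · have h2 := Nat.mul_le_mul_left k (show q + 2 ≤ k by omega)
    rw [Nat.mul_add] at h2
    omega
  · rcases Nat.lt_or_ge q k with hqk | hqk
    · have h1 := Nat.mul_le_mul_left k (show q + 1 ≤ k by omega)
      rw [Nat.mul_add] at h1
      omega
    · omega

lemma le_mul_self (t : ℕ) : coveredAfter k t ≤ k * k := by
  induction t with
  | zero => exact Nat.zero_le _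
  | succ t ih => exact (succ_eq t).trans_le (add_sub_div_le_mul_self ih)

lemma exists_eq_mul_self (hk : 0 < k) : ∃ t, coveredAfter k t = k * k := by
  have key : ∀ t, coveredAfter k t = k * k ∨ t ≤ coveredAfter k t := by
    intro t
    induction t with
    | zero => exact Or.inr le_rfl
    | succ t ih =>
      rw [succ_eq]
      rcases (le_mul_self (k := k) t).lt_or_eq with h | h
      · have := Nat.div_lt_of_lt_mul h
        omega
      · rw [h, Nat.mul_div_cancel _ hk]
        simp
  exact ⟨k * k, (key _).elim id fun h => (le_mul_self _).antisymm h⟩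

end coveredAfter

noncomputable def chargeWeight (k p : ℕ) : ℝ :=
  if p % k + p / k < k then ((k : ℝ) - (p / k : ℕ) + 1)⁻¹
  else ((k : ℝ) - (p / k : ℕ))⁻¹

lemma chargeWeight_le {k c p : ℕ} (hc : c / k < k) (hcp : c ≤ p) (hp : p < c + (k - c / k)) :
    chargeWeight k p ≤ ((k : ℝ) - (c / k : ℕ))⁻¹ := by
  have hk : 0 < k := (Nat.zero_le _).trans_lt hc
  have hpos : (0 : ℝ) < (k : ℝ) - (c / k : ℕ) := sub_pos.2 (by exact_mod_cast hc)
  have hlow : c / k ≤ p / k := Nat.div_le_div_right hcp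
  have hcdiv := Nat.div_add_mod c k
  have hcmod := Nat.mod_lt c hk
  have hpdiv := Nat.div_add_mod p k
  unfold chargeWeight
  generalize c / k = q at *
  generalize p / k = q' at *
  generalize c % k = r at *
  generalize p % k = s at *
  rcases (show q' = q ∨ q' = q + 1 ∨ q + 2 ≤ q' by omega) with rfl | rfl | hfar
  · split
    · exact inv_anti₀ hpos (by linarith)
    · exact le_rfl
  · have hspill : s + (q + 1) < k := by
      rw [Nat.mul_add] at hpdiv
      omega
    rw [if_pos hspill]
    push_cast
    ring_nf
    exact le_rfl
  · have := Nat.mul_le_mul_left k hfar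
    rw [Nat.mul_add] at this
    omega

lemma sum_chargeWeight_Ico_le_one (k c : ℕ) :
    ∑ p ∈ Ico c (c + (k - c / k)), chargeWeight k p ≤ 1 := by
  rcases Nat.lt_or_ge (c / k) k with hc | hc
  · have hpos : (k : ℝ) - (c / k : ℕ) ≠ 0 := (sub_pos.2 (by exact_mod_cast hc)).ne'
    calc ∑ p ∈ Ico c (c + (k - c / k)), chargeWeight k p
        ≤ #(Ico c (c + (k - c / k))) • ((k : ℝ) - (c / k : ℕ))⁻¹ :=
          sum_le_card_nsmul _ _ _ fun p hp =>
            chargeWeight_le hc (mem_Ico.1 hp).1 (mem_Ico.1 hp).2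
      _ = 1 := by
          rw [Nat.card_Ico, Nat.add_sub_cancel_left, nsmul_eq_mul, Nat.cast_sub hc.le,
            mul_inv_cancel₀ hpos]
  · simp [Nat.sub_eq_zero_of_le hc]

lemma lt_sum_chargeWeight_row {k q : ℕ} (hq : q < k) :
    ((k : ℝ) - 1) * ((k : ℝ) - q)⁻¹ < ∑ e ∈ range k, chargeWeight k (q * k + e) := by
  have hk : 0 < k := by omega
  have hterm : ∀ e ∈ range k, chargeWeight k (q * k + e)
      = if e + q < k then ((k : ℝ) - q + 1)⁻¹ else ((k : ℝ) - q)⁻¹ := by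
    intro e he
    have he := mem_range.1 he
    have hdiv : (q * k + e) / k = q := by
      rw [mul_comm, Nat.mul_add_div hk, Nat.div_eq_of_lt he, add_zero]
    have hmod : (q * k + e) % k = e := by rw [mul_comm, Nat.mul_add_mod, Nat.mod_eq_of_lt he]
    rw [chargeWeight, hdiv, hmod]
  rw [sum_congr rfl hterm]
  obtain ⟨r, rfl⟩ := Nat.exists_eq_add_of_le' hq.le
  have hr : (0 : ℝ) < r := by exact_mod_cast (show 0 < r by omega)
  have hgain : ((r : ℝ) - 1) * (r : ℝ)⁻¹ < r * ((r : ℝ) + 1)⁻¹ := by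
    rw [← div_eq_mul_inv, ← div_eq_mul_inv, div_lt_div_iff₀ hr (by linarith)]
    nlinarith
  rw [sum_range_add, sum_congr rfl fun e he => if_pos (by simp at he; omega),
    sum_congr rfl fun e he => if_neg (by omega)]
  simp only [sum_const, card_range, nsmul_eq_mul]
  push_cast
  rw [add_sub_cancel_right]
  have hsplit : ((r : ℝ) + q - 1) * (r : ℝ)⁻¹ = (r - 1) * (r : ℝ)⁻¹ + q * (r : ℝ)⁻¹ := by
    ring
  linarith

lemma mul_log_lt_sum_chargeWeight {k : ℕ} (hk : 0 < k) :
    ((k : ℝ) - 1) * Real.log k < ∑ p ∈ range (k * k), chargeWeight k p := by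
  have hharmonic : ∑ q ∈ range k, ((k : ℝ) - q)⁻¹ = harmonic k := by
    rw [harmonic, Rat.cast_sum, ← sum_range_reflect]
    refine sum_congr rfl fun q hq => ?_
    have hq := mem_range.1 hq
    rw [Nat.cast_sub (by omega : q ≤ k - 1), Nat.cast_sub (by omega : 1 ≤ k)]
    push_cast
    ring_nf
  have hlog : Real.log k ≤ harmonic k :=
    (Real.log_le_log (by exact_mod_cast hk) (Nat.cast_le.2 k.le_succ)).trans
      (by exact_mod_cast log_add_one_le_harmonic k)
  rw [sum_range_mul]
  calc ((k : ℝ) - 1) * Real.log k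
        ≤ ((k : ℝ) - 1) * ∑ q ∈ range k, ((k : ℝ) - q)⁻¹ := by
        rw [hharmonic]
        exact mul_le_mul_of_nonneg_left hlog (sub_nonneg.2 (by exact_mod_cast hk))
    _ = ∑ q ∈ range k, ((k : ℝ) - 1) * ((k : ℝ) - q)⁻¹ := mul_sum _ _ _
    _ < ∑ q ∈ range k, ∑ e ∈ range k, chargeWeight k (q * k + e) :=
        sum_lt_sum_of_nonempty (nonempty_range_iff.2 hk.ne') fun q hq =>
          lt_sum_chargeWeight_row (mem_range.1 hq)

lemma mul_log_lt_of_coveredAfter_eq {k t : ℕ} (hk : 0 < k) (ht : coveredAfter k t = k * k) :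
    ((k : ℝ) - 1) * Real.log k < t := by
  have hsum := sum_range_le_of_sum_Ico_le_one coveredAfter.monotone rfl
    (fun t => sum_chargeWeight_Ico_le_one k (coveredAfter k t)) t
  rw [ht] at hsum
  exact (mul_log_lt_sum_chargeWeight hk).trans_le hsum

def column (k j : ℕ) : Finset (Fin (k * k)) := univ.filter fun p => p.val % k = j

def greedyStep (k t : ℕ) : Finset (Fin (k * k)) :=
  finIco (k * k) (coveredAfter k t) (coveredAfter k (t + 1))

def hardFamily (k m : ℕ) : Finset (Finset (Fin (k * k))) :=
  (range k).image (column k) ∪ (range m).image (greedyStep k)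

section hardFamily

variable {k : ℕ}

lemma card_column_inter_greedyStep_le_one (j t : ℕ) : #(column k j ∩ greedyStep k t) ≤ 1 := by
  refine card_le_one.2 fun a ha b hb => Fin.ext ?_
  simp only [column, greedyStep, mem_inter, mem_filter, mem_univ, true_and, mem_finIco] at ha hb
  have hlen := coveredAfter.succ_le_add (k := k) t
  exact eq_of_mod_eq_of_mem_Ico (c := coveredAfter k t) (mem_Ico.2 ⟨ha.2.1, by omega⟩)
    (mem_Ico.2 ⟨hb.2.1, by omega⟩) (ha.1.trans hb.1.symm)

lemma disjoint_column {j j' : ℕ} (h : j ≠ j') : Disjoint (column k j) (column k j') := by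
  simp only [column, disjoint_filter]
  rintro p - rfl
  exact h

lemma disjoint_greedyStep {t t' : ℕ} (h : t < t') :
    Disjoint (greedyStep k t) (greedyStep k t') := by
  have := coveredAfter.monotone (k := k) (show t + 1 ≤ _ from h)
  simp only [greedyStep, finIco, disjoint_filter]
  omega

lemma hardFamily_pairwise {m : ℕ} :
    ∀ S ∈ hardFamily k m, ∀ S' ∈ hardFamily k m, S ≠ S' → #(S ∩ S') ≤ 1 := by
  have hdisj : ∀ {S S' : Finset (Fin (k * k))}, Disjoint S S' → #(S ∩ S') ≤ 1 := fun h => by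
    simp [disjoint_iff_inter_eq_empty.1 h]
  simp only [hardFamily, mem_union, mem_image, mem_range]
  rintro _ (⟨j, -, rfl⟩ | ⟨t, -, rfl⟩) _ (⟨j', -, rfl⟩ | ⟨t', -, rfl⟩) hne
  · exact hdisj (disjoint_column fun h => hne (h ▸ rfl))
  · exact card_column_inter_greedyStep_le_one j t'
  · exact inter_comm (greedyStep k t) _ ▸ card_column_inter_greedyStep_le_one j' t
  · rcases lt_trichotomy t t' with h | rfl | h
    · exact hdisj (disjoint_greedyStep h)
    · exact absurd rfl hne
    · exact hdisj (disjoint_greedyStep h).symm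

lemma card_image_column (hk : 0 < k) : #((range k).image (column k)) = k := by
  rw [card_image_of_injOn, card_range]
  rintro j hj j' - h
  have hj := mem_range.1 hj
  have hmem : (⟨j, hj.trans_le (Nat.le_mul_of_pos_left k hk)⟩ : Fin (k * k)) ∈ column k j' :=
    h ▸ by simp [column, Nat.mod_eq_of_lt hj]
  simpa [column, Nat.mod_eq_of_lt hj] using hmem

lemma biUnion_column (hk : 0 < k) : ((range k).image (column k)).biUnion id = univ := by
  refine eq_univ_of_forall fun p => mem_biUnion.2 ⟨column k (p.val % k), ?_, ?_⟩
  · exact mem_image_of_mem _ (mem_range.2 (Nat.mod_lt _ hk))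
  · simp [column]

lemma card_column_sdiff_le (j c : ℕ) : #(column k j \ finIco (k * k) 0 c) ≤ k - c / k := by
  have hmem : ∀ p ∈ column k j \ finIco (k * k) 0 c, p.val % k = j ∧ c ≤ p.val :=
    fun p hp => by simpa [column] using hp
  calc #(column k j \ finIco (k * k) 0 c) ≤ #(Ico (c / k) k) := by
        refine card_le_card_of_injOn (fun p => p.val / k) (fun p hp => ?_)
          fun p hp p' hp' h => ?_
        · exact mem_coe.2
            (mem_Ico.2 ⟨Nat.div_le_div_right (hmem p hp).2, Nat.div_lt_of_lt_mul p.isLt⟩)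
        · refine Fin.ext ?_
          rw [← Nat.div_add_mod p.val k, ← Nat.div_add_mod p'.val k, (hmem p hp).1,
            (hmem p' hp').1]
          exact congrArg (k * · + j) h
    _ = k - c / k := Nat.card_Ico _ _

lemma card_greedyStep (t : ℕ) : #(greedyStep k t) = k - coveredAfter k t / k := by
  rw [greedyStep, card_finIco (coveredAfter.le_mul_self _), coveredAfter.succ_eq,
    Nat.add_sub_cancel_left]

lemma greedyStep_sdiff_covered (t : ℕ) :
    greedyStep k t \ finIco (k * k) 0 (coveredAfter k t) = greedyStep k t := by
  refine sdiff_eq_self_of_disjoint ?_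
  simp only [greedyStep, finIco, disjoint_filter]
  omega

lemma card_sdiff_covered_le {m S} (hS : S ∈ hardFamily k m) (i : ℕ) :
    #(S \ finIco (k * k) 0 (coveredAfter k i)) ≤ k - coveredAfter k i / k := by
  simp only [hardFamily, mem_union, mem_image, mem_range] at hS
  rcases hS with ⟨j, -, rfl⟩ | ⟨t, -, rfl⟩
  · exact card_column_sdiff_le j _
  · rcases Nat.lt_or_ge t i with h | h
    · have := coveredAfter.monotone (k := k) (show t + 1 ≤ _ from h)
      have hsub : greedyStep k t ⊆ finIco (k * k) 0 (coveredAfter k i) := fun p hp => by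
        simp only [greedyStep, mem_finIco] at hp ⊢
        omega
      simp [sdiff_eq_empty_iff_subset.2 hsub]
    · calc #(greedyStep k t \ finIco (k * k) 0 (coveredAfter k i)) ≤ #(greedyStep k t) :=
            card_le_card sdiff_subset
        _ = k - coveredAfter k t / k := card_greedyStep t
        _ ≤ k - coveredAfter k i / k :=
            Nat.sub_le_sub_left (Nat.div_le_div_right (coveredAfter.monotone h)) k

end hardFamily

/-- For every `k ≥ 2` there is a simple set family `𝓢` over `[k²]` such that some `k`
sets of `𝓢` cover the universe, yet some greedy execution (each picked set covers the
maximum number of yet-uncovered elements, steps taken only while something is uncovered,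
ending with everything covered) uses more than `(k-1)·ln k` sets. -/
theorem stmt15 (k : ℕ) (hk : 2 ≤ k) :
    ∃ 𝓢 : Finset (Finset (Fin (k * k))),
      (∀ S ∈ 𝓢, ∀ S' ∈ 𝓢, S ≠ S' → (S ∩ S').card ≤ 1) ∧
      (∃ 𝓚 ⊆ 𝓢, 𝓚.card = k ∧ 𝓚.biUnion id = Finset.univ) ∧
      ∃ (m : ℕ) (T : Fin m → Finset (Fin (k * k))),
        (∀ i, T i ∈ 𝓢) ∧
        (∀ i : Fin m, (Finset.univ.filter fun j => j < i).biUnion T ≠ Finset.univ) ∧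
        (∀ i : Fin m, ∀ S ∈ 𝓢,
          (S \ (Finset.univ.filter fun j => j < i).biUnion T).card
            ≤ (T i \ (Finset.univ.filter fun j => j < i).biUnion T).card) ∧
        Finset.univ.biUnion T = Finset.univ ∧
        ((k : ℝ) - 1) * Real.log k < (m : ℝ) := by
  have hk0 : 0 < k := by omega
  have hfinish := coveredAfter.exists_eq_mul_self hk0
  obtain ⟨m, hm, hlt⟩ :
      ∃ m, coveredAfter k m = k * k ∧ ∀ t < m, coveredAfter k t < k * k :=
    ⟨_, Nat.find_spec hfinish, fun t ht =>
      (coveredAfter.le_mul_self t).lt_of_ne (Nat.find_min hfinish ht)⟩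
  have hcovered (i : ℕ) (hi : i ≤ m) :
      (univ.filter fun j : Fin m => j.val < i).biUnion (fun j => greedyStep k j)
        = finIco (k * k) 0 (coveredAfter k i) :=
    biUnion_finIco_consecutive coveredAfter.monotone rfl hi
  refine ⟨hardFamily k m, hardFamily_pairwise,
    ⟨_, subset_union_left, card_image_column hk0, biUnion_column hk0⟩,
    m, fun i => greedyStep k i,
    fun i => mem_union_right _ (mem_image_of_mem _ (mem_range.2 i.isLt)),
    fun i => ?_, fun i S hS => ?_, ?_, mul_log_lt_of_coveredAfter_eq hk0 hm⟩
  · simp only [Fin.lt_def]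
    rw [hcovered i i.isLt.le, Ne, finIco_zero_eq_univ_iff, not_le]
    exact hlt i i.isLt
  · simp only [Fin.lt_def]
    rw [hcovered i i.isLt.le, greedyStep_sdiff_covered, card_greedyStep]
    exact card_sdiff_covered_le hS i
  · simpa [hm, finIco_zero_eq_univ_iff.2 le_rfl] using hcovered m le_rfl
end
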